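/- arXiv:1901.08538 — 11 statements merged into one kernel-verified Lean document; each statement's English description precedes it below -/
import Mathlib

section
/- Let (X,d) be a metric space, (x_n)_{n≥1} a sequence in X, ε > 0, λ ∈ ℕ, and β : ℕ → ℕ a strictly increasing function. Assume (x_n) has at most λ many (ε/2)-fluctuations at distance β: every finite sequence of indices n_1 < ⋯ < n_k with β(n_i) ≤ n_{i+1} and d(x_{n_i}, x_{n_{i+1}}) ≥ ε/2 for all 1 ≤ i < k satisfies k ≤ λ. Then for every strictly increasing F : ℕ → ℕ there exists N ≤ F̃^{(2λ+3)}(1), where F̃(n) := max(F(n), β(n)) and F̃^{(j)} denotes the j-fold iterate, such that for all n, m ∈ [N, F(N)] one has d(x_n, x_m) < ε. -/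
/-- A uniform bound on (ε/2)-fluctuations at distance β yields an explicit rate of
metastability at ε. -/
theorem stmt_1 {X : Type*} [MetricSpace X] (x : ℕ → X) (ε : ℝ) (hε : 0 < ε)
    (lam : ℕ) (β : ℕ → ℕ) (hβ : StrictMono β)
    (hfluc : ∀ (k : ℕ) (idx : ℕ → ℕ),
      (∀ i : ℕ, i + 1 < k → idx i < idx (i + 1) ∧ β (idx i) ≤ idx (i + 1) ∧
        ε / 2 ≤ dist (x (idx i)) (x (idx (i + 1)))) → k ≤ lam) :
    ∀ F : ℕ → ℕ, StrictMono F →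
      ∃ N ≤ (fun n => max (F n) (β n))^[2 * lam + 3] 1,
        ∀ n m : ℕ, N ≤ n → n ≤ F N → N ≤ m → m ≤ F N → dist (x n) (x m) < ε := by
  intro F hF
  set g : ℕ → ℕ := fun n => max (F n) (β n) with hg
  have hgle : ∀ n, n ≤ g n := fun n => le_trans hF.le_apply (le_max_left _ _)
  have hiter : ∀ k n, n ≤ g^[k] n := by
    intro k
    induction k with
    | zero => simp
    | succ k ih =>
      intro n
      calc n ≤ g n := hgle n
        _ ≤ g^[k] (g n) := ih _
        _ = g^[k+1] n := (Function.iterate_succ_apply g k n).symm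
  by_contra hcon
  push_neg at hcon
  set M : ℕ → ℕ := fun j => g^[2 * min j lam] 1 with hM
  have hMle : ∀ j, M j ≤ g^[2*lam+3] 1 := by
    intro j
    calc M j ≤ g^[(2*lam+3) - 2*min j lam] (M j) := hiter _ _
      _ = g^[(2*lam+3) - 2*min j lam + 2*min j lam] 1 := by
          rw [Function.iterate_add_apply]
      _ = g^[2*lam+3] 1 := by
          congr 1
          have := min_le_right j lam
          omega
  choose a b ha1 ha2 hb1 hb2 hd using fun j => hcon (M j) (hMle j)
  let c : ℕ → ℕ := fun j =>
    Nat.rec (a 0) (fun j cj =>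
      if ε/2 ≤ dist (x cj) (x (a (j+1))) then a (j+1) else b (j+1)) j
  have hcsucc : ∀ j, c (j+1) =
      if ε/2 ≤ dist (x (c j)) (x (a (j+1))) then a (j+1) else b (j+1) :=
    fun j => rfl
  have hcmem : ∀ j, c j = a j ∨ c j = b j := by
    intro j
    cases j with
    | zero => exact Or.inl rfl
    | succ j =>
      rw [hcsucc]
      split
      · exact Or.inl rfl
      · exact Or.inr rfl
  have hdist : ∀ j, ε/2 ≤ dist (x (c j)) (x (c (j+1))) := by
    intro j
    rw [hcsucc]
    split
    · assumption
    · rename_i h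
      push_neg at h
      have htri := dist_triangle (x (a (j+1))) (x (c j)) (x (b (j+1)))
      have hdj := hd (j+1)
      rw [dist_comm (x (a (j+1))) (x (c j))] at htri
      linarith
  have hbound : ∀ j, M j ≤ c j ∧ c j ≤ F (M j) := by
    intro j
    rcases hcmem j with h | h <;> rw [h]
    · exact ⟨ha1 j, ha2 j⟩
    · exact ⟨hb1 j, hb2 j⟩
  have hkey : lam + 1 ≤ lam := by
    apply hfluc (lam + 1) c
    intro i hi
    have hilam : i < lam := by omega
    have hmin_i : min i lam = i := by omega
    have hmin_i1 : min (i+1) lam = i+1 := by omega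
    have h1 : c i ≤ F (M i) := (hbound i).2
    have h2 : M (i+1) ≤ c (i+1) := (hbound (i+1)).1
    have hβc : β (c i) ≤ c (i+1) := by
      have e1 : c i ≤ g (M i) := h1.trans (le_max_left _ _)
      have e2 : β (c i) ≤ β (g (M i)) := hβ.monotone e1
      have e3 : β (g (M i)) ≤ g (g (M i)) := le_max_right _ _
      have e4 : g (g (M i)) = M (i+1) := by
        simp only [hM, hmin_i, hmin_i1]
        rw [show 2*(i+1) = 2*i+1+1 by ring, Function.iterate_succ_apply',
          Function.iterate_succ_apply']
      omega
    have hle : c i ≤ c (i+1) := hβ.le_apply.trans hβc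
    have hlt : c i < c (i+1) := by
      rcases lt_or_eq_of_le hle with h | h
      · exact h
      · exfalso
        have hdi := hdist i
        rw [h] at hdi
        simp at hdi
        linarith
    exact ⟨hlt, hβc, hdist i⟩
  omega
end

section
/- Let β̃ : ℕ → ℕ satisfy β̃(n) > n for all n. Then there exists a family S of {0,1}-valued sequences together with a function Φ assigning to each strictly increasing F : ℕ → ℕ and each ε > 0 a natural number, such that: (i) Φ is a uniform rate of metastability for S, i.e. for every (y_m) ∈ S, every ε > 0 and every strictly increasing F : ℕ → ℕ there exists N ≤ Φ(F, ε) with |y_n − y_m| < ε for all n, m ∈ [N, F(N)]; but (ii) S has no uniform bound on the number of 1-fluctuations at distance β̃: for every K ∈ ℕ there is (y_m) ∈ S and a finite sequence of indices m_1 < ⋯ < m_k with k > K, β̃(m_i) ≤ m_{i+1} and |y_{m_i} − y_{m_{i+1}}| ≥ 1 for all 1 ≤ i < k. -/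
/-- For any distance function β̃ with β̃(n) > n there is a family of 0/1-valued sequences
with a uniform rate of metastability but no uniform bound on the number of
1-fluctuations at distance β̃. -/
theorem stmt_3 (β : ℕ → ℕ) (hβ : ∀ n : ℕ, n < β n) :
    ∃ (S : Set (ℕ → ℝ)) (Φ : (ℕ → ℕ) → ℝ → ℕ),
      (∀ y ∈ S, ∀ m : ℕ, y m = 0 ∨ y m = 1) ∧
      (∀ y ∈ S, ∀ ε : ℝ, 0 < ε → ∀ F : ℕ → ℕ, StrictMono F →
        ∃ N ≤ Φ F ε, ∀ n m : ℕ, N ≤ n → n ≤ F N → N ≤ m → m ≤ F N → |y n - y m| < ε) ∧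
      (∀ K : ℕ, ∃ y ∈ S, ∃ (k : ℕ) (idx : ℕ → ℕ), K < k ∧
        (∀ i : ℕ, i + 1 < k → idx i < idx (i + 1) ∧ β (idx i) ≤ idx (i + 1) ∧
          1 ≤ |y (idx i) - y (idx (i + 1))|)) := by
  set y : ℕ → ℕ → ℝ := fun K m =>
    if Even (((Finset.Icc 1 K).filter (fun i => β^[i] K ≤ m)).card) then 0 else 1 with hy
  have hmono : ∀ K, StrictMono fun i => β^[i] K := fun K =>
    strictMono_nat_of_lt_succ (fun n => by
      rw [Function.iterate_succ_apply']; exact hβ _)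
  have hval : ∀ K j, j ≤ K → y K (β^[j] K) = if Even j then 0 else 1 := by
    intro K j hj
    have hcard : ((Finset.Icc 1 K).filter (fun i => β^[i] K ≤ β^[j] K)).card = j := by
      have : ((Finset.Icc 1 K).filter (fun i => β^[i] K ≤ β^[j] K)) = Finset.Icc 1 j := by
        ext i
        simp only [Finset.mem_filter, Finset.mem_Icc, (hmono K).le_iff_le]
        omega
      rw [this, Nat.card_Icc]
      omega
    simp only [hy, hcard]
  refine ⟨Set.range y, fun F _ => Finset.sup (Finset.range (F 0 + 1)) (fun K => β^[K] K),
    ?_, ?_, ?_⟩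
  · rintro _ ⟨K, rfl⟩ m
    by_cases h : Even (((Finset.Icc 1 K).filter (fun i => β^[i] K ≤ m)).card) <;>
      simp [hy, h]
  · rintro _ ⟨K, rfl⟩ ε hε F hF
    by_cases hK : K ≤ F 0
    · refine ⟨β^[K] K, ?_, ?_⟩
      · exact Finset.le_sup (f := fun K => β^[K] K) (Finset.mem_range.mpr (Nat.lt_succ_of_le hK))
      intro n m hn _ hm _
      have hconst : ∀ p, β^[K] K ≤ p → y K p = if Even K then 0 else 1 := by
        intro p hp
        have hcard : ((Finset.Icc 1 K).filter (fun i => β^[i] K ≤ p)).card = K := by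
          rw [Finset.filter_true_of_mem, Nat.card_Icc]
          · omega
          · intro i hi
            exact le_trans ((hmono K).monotone (Finset.mem_Icc.mp hi).2) hp
        simp only [hy, hcard]
      rw [hconst n hn, hconst m hm, sub_self, abs_zero]
      exact hε
    · refine ⟨0, Nat.zero_le _, ?_⟩
      intro n m _ hn _ hm
      have hz : ∀ p, p ≤ F 0 → y K p = 0 := by
        intro p hp
        have hcard : ((Finset.Icc 1 K).filter (fun i => β^[i] K ≤ p)).card = 0 := by
          rw [Finset.card_eq_zero, Finset.filter_eq_empty_iff]
          intro i hi hle
          have h1 : (1 : ℕ) ≤ i := (Finset.mem_Icc.mp hi).1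
          have : K < β^[i] K := by
            calc K = β^[0] K := rfl
            _ < β^[i] K := hmono K (by omega)
          omega
        simp [hy, hcard]
      rw [hz n hn, hz m hm, sub_self, abs_zero]
      exact hε
  · intro K
    refine ⟨y (K + 1), ⟨K + 1, rfl⟩, K + 2, fun i => β^[i] (K + 1), by omega, ?_⟩
    intro i hi
    refine ⟨hmono _ (Nat.lt_succ_self i), ?_, ?_⟩
    · show β (β^[i] (K + 1)) ≤ β^[i + 1] (K + 1)
      rw [Function.iterate_succ_apply']
    · rw [hval (K + 1) i (by omega), hval (K + 1) (i + 1) (by omega)]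
      rcases Nat.even_or_odd i with h | h
      · rw [if_pos h, if_neg (by simp [Nat.even_add_one, h])]
        norm_num
      · rw [if_neg (Nat.not_even_iff_odd.mpr h), if_pos (Odd.add_one h)]
        norm_num
end

section
/- Let G be a countable group admitting a Fřlner sequence (F_n), i.e. a sequence of nonempty finite subsets of G with |F_n Δ gF_n| / |F_n| → 0 for every g ∈ G. Then G admits a left-invariant finitely additive probability measure: there exists a function ν : Set(G) → ℝ such that ν(B) ∈ [0,1] for every B ⊆ G, ν(∅) = 0, ν(G) = 1, ν(B ∪ C) = ν(B) + ν(C) whenever B and C are disjoint subsets of G, and ν(gB) = ν(B) for every g ∈ G and every B ⊆ G. -/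
/-!
For the counting measure on `G`, a Følner sequence of finite sets is Følner in the sense of
`MeasureTheory.IsFoelner`, so `IsFoelner.amenable` provides an invariant finitely additive
`ℝ≥0∞`-valued mean (the ultrafilter limit of the densities `|B ∩ F n| / |F n|`). Additivity and
the value `1` on `G` bound this mean by `1`, so its real part is the required `ν`.
-/

open Filter Pointwise Set
open scoped symmDiff Topology
open MeasureTheory.Measure (count count_apply_finset)

namespace MeasureTheory

variable {G X ι : Type*} [Group G] [MulAction G X] [MeasurableSpace X] {l : Filter ι}

theorem isFoelner_count_of_tendsto_card [MeasurableSingletonClass X] [DecidableEq X]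
    (F : ι → Finset X) (hF : ∀ i, (F i).Nonempty)
    (hFolner : ∀ g : G,
      Tendsto (fun i => ((symmDiff (F i) (g • F i)).card : ℝ) / (F i).card) l (𝓝 0)) :
    IsFoelner G count l (fun i => (F i : Set X)) where
  eventually_measurableSet := .of_forall fun i => (F i).measurableSet
  eventually_meas_ne_zero := .of_forall fun i => by simpa using (hF i).ne_empty
  eventually_meas_ne_top := .of_forall fun i => by simp
  tendsto_meas_smul_symmDiff g := by
    have key : ∀ i, count ((g • (F i : Set X)) ∆ F i) / count (F i : Set X) =
        ENNReal.ofReal (((symmDiff (F i) (g • F i)).card : ℝ) / (F i).card) := fun i => by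
      rw [symmDiff_comm, ← Finset.coe_smul_finset, ← Finset.coe_symmDiff, count_apply_finset,
        count_apply_finset, ENNReal.ofReal_div_of_pos (by exact_mod_cast (hF i).card_pos)]
      simp
    simpa only [key, ENNReal.ofReal_zero] using ENNReal.tendsto_ofReal (hFolner g)

theorem IsFoelner.exists_invariant_mean [DiscreteMeasurableSpace X] {μ : Measure X}
    [SMulInvariantMeasure G X μ] [l.NeBot] {F : ι → Set X} (hfoel : IsFoelner G μ l F) :
    ∃ ν : Set X → ℝ,
      (∀ B : Set X, 0 ≤ ν B ∧ ν B ≤ 1) ∧ ν ∅ = 0 ∧ ν univ = 1 ∧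
      (∀ B C : Set X, Disjoint B C → ν (B ∪ C) = ν B + ν C) ∧
      (∀ (g : G) (B : Set X), ν (g • B) = ν B) := by
  obtain ⟨m, hm_univ, hm_add, hm_smul⟩ := hfoel.amenable
  have hm_union : ∀ B C, Disjoint B C → m (B ∪ C) = m B + m C :=
    fun B C => hm_add B C .of_discrete
  have hm_le_one : ∀ B, m B ≤ 1 := fun B => by
    rw [← hm_univ, ← union_compl_self B, hm_union _ _ disjoint_compl_right]
    exact le_self_add
  have hm_ne_top : ∀ B, m B ≠ ⊤ := fun B => ne_top_of_le_ne_top ENNReal.one_ne_top (hm_le_one B)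
  have hm_empty : m ∅ = 0 := by
    have h := hm_union univ ∅ (disjoint_empty _)
    rw [union_empty] at h
    exact ((ENNReal.add_right_inj (hm_ne_top univ)).1 (by rwa [add_zero])).symm
  refine ⟨fun B => (m B).toReal, fun B => ⟨ENNReal.toReal_nonneg, ?_⟩, by simp [hm_empty],
    by simp [hm_univ], fun B C h => ?_, fun g B => by simp only [hm_smul]⟩
  · exact ENNReal.toReal_le_of_le_ofReal zero_le_one (by simpa using hm_le_one B)
  · simp only [hm_union B C h, ENNReal.toReal_add (hm_ne_top B) (hm_ne_top C)]

end MeasureTheory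

open MeasureTheory

theorem stmt_6_general {G : Type*} [Group G] [DecidableEq G]
    (F : ℕ → Finset G) (hF : ∀ n, (F n).Nonempty)
    (hFolner : ∀ g : G,
      Tendsto (fun n => ((symmDiff (F n) (g • F n)).card : ℝ) / (F n).card) atTop (nhds 0)) :
    ∃ ν : Set G → ℝ,
      (∀ B : Set G, 0 ≤ ν B ∧ ν B ≤ 1) ∧ ν ∅ = 0 ∧ ν Set.univ = 1 ∧
      (∀ B C : Set G, Disjoint B C → ν (B ∪ C) = ν B + ν C) ∧
      (∀ (g : G) (B : Set G), ν (g • B) = ν B) := by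
  let _ : MeasurableSpace G := ⊤
  exact (isFoelner_count_of_tendsto_card F hF hFolner).exists_invariant_mean

/-- A countable group with a Følner sequence admits a left-invariant finitely additive
probability measure. -/
theorem stmt_6 {G : Type*} [Group G] [Countable G] [DecidableEq G]
    (F : ℕ → Finset G) (hF : ∀ n, (F n).Nonempty)
    (hFolner : ∀ g : G,
      Tendsto (fun n => ((symmDiff (F n) (g • F n)).card : ℝ) / (F n).card) atTop (nhds 0)) :
    ∃ ν : Set G → ℝ,
      (∀ B : Set G, 0 ≤ ν B ∧ ν B ≤ 1) ∧ ν ∅ = 0 ∧ ν Set.univ = 1 ∧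
      (∀ B C : Set G, Disjoint B C → ν (B ∪ C) = ν B + ν C) ∧
      (∀ (g : G) (B : Set G), ν (g • B) = ν B) :=
  stmt_6_general F hF hFolner
end

section
/- The free group F₂ on two generators a, b does not have the Fřlner property: there exist ε > 0 such that for every nonempty finite subset F ⊆ F₂ there is some k ∈ {a, b, a⁻¹, b⁻¹} with |F Δ kF| ≥ ε|F|. In particular, F₂ admits no Fřlner sequence. -/
/-!
Classify the elements of a finite set `F ⊆ F₂` by the first letter of their reduced word.
Left multiplication by `a⁻¹` sends every element not starting with `a` to one starting with `a⁻¹`,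
injectively; so the elements of `F` not starting with `a`, beyond those already starting with `a⁻¹`,
are bounded by `|a⁻¹F \ F|`. Adding the same bound for `b`, the four classes starting with
`a, a⁻¹, b, b⁻¹` are disjoint and together have at most `|F|` elements, which leaves
`|F| ≤ |F Δ a⁻¹F| + |F Δ b⁻¹F|`. Hence one of `a⁻¹, b⁻¹` moves at least half of `F`.
-/
open Filter Pointwise Finset

namespace FreeGroup

variable {α : Type*} [DecidableEq α]

theorem toWord_inv_of_mul {i : α} {w : FreeGroup α} (hw : w.toWord.head? ≠ some (i, true)) :
    ((of i)⁻¹ * w).toWord = (i, false) :: w.toWord := by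
  rw [toWord_mul, toWord_inv, toWord_of]
  refine IsReduced.reduce_eq (List.isChain_cons.2 ⟨?_, isReduced_toWord⟩)
  rintro ⟨j, b⟩ hj rfl
  cases b
  · rfl
  · exact absurd hj hw

-- An arbitrary instance rather than the canonical one, so as to match the one `stmt_10` binds.
variable [DecidableEq (FreeGroup α)]

theorem card_le_card_head_add_card_symmDiff (i : α) (F : Finset (FreeGroup α)) :
    #F ≤ #{w ∈ F | w.toWord.head? = some (i, true)} + #{w ∈ F | w.toWord.head? = some (i, false)}
      + #(symmDiff F ((of i)⁻¹ • F)) := by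
  set X := {w ∈ F | w.toWord.head? ≠ some (i, true)}
  have hX : (of i)⁻¹ • X ⊆ {w ∈ F | w.toWord.head? = some (i, false)} ∪ ((of i)⁻¹ • F \ F) := by
    rintro _ hx
    obtain ⟨w, hw, rfl⟩ := mem_smul_finset.1 hx
    rw [mem_filter] at hw
    by_cases hF : (of i)⁻¹ • w ∈ F
    · exact mem_union_left _ (mem_filter.2 ⟨hF, by simp [smul_eq_mul, toWord_inv_of_mul hw.2]⟩)
    · exact mem_union_right _ (mem_sdiff.2 ⟨smul_mem_smul_finset hw.1, hF⟩)
  have hsdiff : (of i)⁻¹ • F \ F ⊆ symmDiff F ((of i)⁻¹ • F) := by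
    rw [symmDiff_def]
    exact le_sup_right
  calc #F = #{w ∈ F | w.toWord.head? = some (i, true)} + #X :=
        (card_filter_add_card_filter_not _).symm
    _ ≤ _ := by
      have := (card_le_card hX).trans (card_union_le _ _)
      rw [card_smul_finset] at this
      have := card_le_card hsdiff
      omega

theorem card_le_card_symmDiff_add_card_symmDiff {i j : α} (hij : i ≠ j)
    (F : Finset (FreeGroup α)) :
    #F ≤ #(symmDiff F ((of i)⁻¹ • F)) + #(symmDiff F ((of j)⁻¹ • F)) := by
  have hclasses := sum_card_fiberwise_eq_card_filter F
    {some (i, true), some (i, false), some (j, true), some (j, false)} (fun w => w.toWord.head?)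
  rw [sum_insert (by simp [hij]), sum_insert (by simp [hij]), sum_pair (by simp)] at hclasses
  have := card_filter_le F fun w => w.toWord.head? ∈
    ({some (i, true), some (i, false), some (j, true), some (j, false)} : Finset _)
  have := card_le_card_head_add_card_symmDiff i F
  have := card_le_card_head_add_card_symmDiff j F
  omega

theorem exists_half_card_le_card_symmDiff {i j : α} (hij : i ≠ j) (F : Finset (FreeGroup α)) :
    ∃ k ∈ ({(of i)⁻¹, (of j)⁻¹} : Finset (FreeGroup α)),
      1 / 2 * (#F : ℝ) ≤ #(symmDiff F (k • F)) := by
  have hsum : (#F : ℝ) ≤ #(symmDiff F ((of i)⁻¹ • F)) + #(symmDiff F ((of j)⁻¹ • F)) := by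
    exact_mod_cast card_le_card_symmDiff_add_card_symmDiff hij F
  rcases le_total (#(symmDiff F ((of i)⁻¹ • F)) : ℝ) #(symmDiff F ((of j)⁻¹ • F)) with h | h
  · exact ⟨_, mem_insert_of_mem (mem_singleton_self _), by linarith⟩
  · exact ⟨_, mem_insert_self _ _, by linarith⟩

end FreeGroup

theorem not_exists_folner_sequence {G : Type*} [Group G] [DecidableEq G] {K : Finset G} {ε : ℝ}
    (hε : 0 < ε)
    (hK : ∀ F : Finset G, F.Nonempty → ∃ k ∈ K, ε * #F ≤ (#(symmDiff F (k • F)) : ℝ)) :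
    ¬ ∃ F : ℕ → Finset G, (∀ n, (F n).Nonempty) ∧
      ∀ g : G, Tendsto (fun n => (#(symmDiff (F n) (g • F n)) : ℝ) / #(F n)) atTop (nhds 0) := by
  rintro ⟨F, hne, hF⟩
  obtain ⟨n, hn⟩ := ((eventually_all_finset K).2 fun k _ =>
    (hF k).eventually_lt_const hε).exists
  obtain ⟨k, hk, hle⟩ := hK (F n) (hne n)
  have hpos : (0 : ℝ) < #(F n) := by exact_mod_cast (hne n).card_pos
  exact (hle.trans_lt ((div_lt_iff₀ hpos).1 (hn k hk))).false

/-- The free group on two generators does not have the Følner property, and hence admits no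
Følner sequence. -/
theorem stmt_10 [DecidableEq (FreeGroup (Fin 2))] :
    (∃ ε : ℝ, 0 < ε ∧ ∀ F : Finset (FreeGroup (Fin 2)), F.Nonempty →
      ∃ k ∈ ({FreeGroup.of 0, FreeGroup.of 1, (FreeGroup.of 0)⁻¹, (FreeGroup.of 1)⁻¹} :
          Finset (FreeGroup (Fin 2))),
        ε * F.card ≤ ((symmDiff F (k • F)).card : ℝ)) ∧
    ¬ ∃ F : ℕ → Finset (FreeGroup (Fin 2)), (∀ n, (F n).Nonempty) ∧
      ∀ g : FreeGroup (Fin 2),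
        Tendsto (fun n => ((symmDiff (F n) (g • F n)).card : ℝ) / (F n).card)
          atTop (nhds 0) := by
  have hK : ∀ F : Finset (FreeGroup (Fin 2)), F.Nonempty →
      ∃ k ∈ ({FreeGroup.of 0, FreeGroup.of 1, (FreeGroup.of 0)⁻¹, (FreeGroup.of 1)⁻¹} :
          Finset (FreeGroup (Fin 2))),
        1 / 2 * F.card ≤ ((symmDiff F (k • F)).card : ℝ) := by
    intro F _
    obtain ⟨k, hk, hle⟩ := FreeGroup.exists_half_card_le_card_symmDiff zero_ne_one F
    refine ⟨k, ?_, hle⟩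
    rw [mem_insert, mem_singleton] at hk
    rcases hk with rfl | rfl <;> simp
  exact ⟨⟨1 / 2, one_half_pos, hK⟩, not_exists_folner_sequence one_half_pos hK⟩
end

section
/- Let G be a group and S a finite symmetric subset of G (S = S⁻¹) with 1 ∈ S, and let B(n) := S^n = {s_1 ⋯ s_n : s_i ∈ S} denote the n-fold product set (the closed ball of radius n in the word metric determined by S). Suppose G has subexponential growth with respect to S, i.e. lim_{n→∞} (log |B(n)|) / n = 0. Then for every ε > 0 there exists n ∈ ℕ such that |B(n) Δ kB(n)| < ε·|B(n)| for all k ∈ S. Consequently, if S generates G, then for every finite K ⊆ S and ε > 0 there is a nonempty finite set F with |F Δ kF| < ε|F| for all k ∈ K. -/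
open Filter Pointwise

/-- Groups of subexponential growth: word-metric balls form Følner sets. -/
theorem stmt_11 {G : Type*} [Group G] [DecidableEq G]
    (S : Finset G) (hS1 : (1 : G) ∈ S) (hSsymm : ∀ s ∈ S, s⁻¹ ∈ S)
    (hsub : Tendsto (fun n : ℕ => Real.log ((S ^ n).card) / n) atTop (nhds 0)) :
    (∀ ε : ℝ, 0 < ε → ∃ n : ℕ,
      ∀ k ∈ S, ((symmDiff (S ^ n) (k • (S ^ n))).card : ℝ) < ε * (S ^ n).card) ∧
    (Subgroup.closure (S : Set G) = ⊤ →
      ∀ K : Finset G, K ⊆ S → ∀ ε : ℝ, 0 < ε →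
        ∃ F : Finset G, F.Nonempty ∧
          ∀ k ∈ K, ((symmDiff F (k • F)).card : ℝ) < ε * F.card) := by
  have hcardpos : ∀ n : ℕ, (0:ℝ) < ((S ^ n).card : ℝ) := fun n => by
    have : (1:G) ∈ S ^ n := Finset.one_mem_pow hS1
    exact_mod_cast Finset.card_pos.2 ⟨1, this⟩
  -- growth lemma
  have hgrow : ∀ ε : ℝ, 0 < ε → ∃ n : ℕ,
      ((S ^ (n+1)).card : ℝ) < (1 + ε) * (S ^ n).card := by
    intro ε hε
    by_contra h
    push_neg at h
    have hc1 : (1:ℝ) < 1 + ε := by linarith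
    have hpow : ∀ n : ℕ, (1 + ε) ^ n ≤ ((S ^ n).card : ℝ) := by
      intro n
      induction n with
      | zero => simp
      | succ n ih =>
        have := h n
        have h0 := hcardpos n
        calc (1 + ε) ^ (n+1) = (1 + ε) * (1 + ε) ^ n := by ring
          _ ≤ (1 + ε) * ((S ^ n).card : ℝ) := by nlinarith
          _ ≤ ((S ^ (n+1)).card : ℝ) := this
    have hlogpos : 0 < Real.log (1 + ε) := Real.log_pos hc1
    have hev : ∀ᶠ n : ℕ in atTop,
        Real.log ((S ^ n).card) / n < Real.log (1 + ε) :=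
      hsub.eventually (Filter.Tendsto.eventually_lt_const hlogpos tendsto_id)
    have hev2 : ∀ᶠ n : ℕ in atTop, 1 ≤ n := eventually_ge_atTop 1
    obtain ⟨n, h1, h2⟩ := (hev.and hev2).exists
    have hn' : (0:ℝ) < (n:ℝ) := by exact_mod_cast h2
    have : Real.log (1 + ε) ≤ Real.log ((S ^ n).card) / n := by
      rw [le_div_iff₀ hn']
      calc Real.log (1 + ε) * n = Real.log ((1 + ε) ^ n) := by
            rw [Real.log_pow]; ring
        _ ≤ Real.log ((S ^ n).card) :=
            Real.log_le_log (by positivity) (hpow n)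
    linarith
  have h1 : ∀ ε : ℝ, 0 < ε → ∃ n : ℕ,
      ∀ k ∈ S, ((symmDiff (S ^ n) (k • (S ^ n))).card : ℝ) < ε * (S ^ n).card := by
    intro ε hε
    obtain ⟨n, hn⟩ := hgrow (ε/2) (by linarith)
    refine ⟨n, fun k hk => ?_⟩
    have hmono : S ^ n ⊆ S ^ (n+1) :=
      Finset.pow_subset_pow_right hS1 (Nat.le_succ n)
    have hksub : ∀ a ∈ S, a • (S ^ n) ⊆ S ^ (n+1) := by
      intro a ha
      rw [pow_succ']
      rw [← Finset.singleton_mul]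
      exact Finset.mul_subset_mul_right (Finset.singleton_subset_iff.2 ha)
    -- bound for k • S^n \ S^n
    have hB : (k • (S ^ n) \ S ^ n).card ≤ (S ^ (n+1)).card - (S ^ n).card := by
      rw [← Finset.card_sdiff_of_subset hmono]
      exact Finset.card_le_card (Finset.sdiff_subset_sdiff (hksub k hk) le_rfl)
    -- bound for S^n \ k • S^n
    have hA : (S ^ n \ k • (S ^ n)).card ≤ (S ^ (n+1)).card - (S ^ n).card := by
      have hinj : (S ^ n \ k • (S ^ n)).card
          = (k⁻¹ • (S ^ n) \ S ^ n).card := by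
        rw [← Finset.card_smul_finset k⁻¹ (S ^ n \ k • (S ^ n)),
          Finset.smul_finset_sdiff, inv_smul_smul]
      rw [hinj, ← Finset.card_sdiff_of_subset hmono]
      exact Finset.card_le_card
        (Finset.sdiff_subset_sdiff (hksub k⁻¹ (hSsymm k hk)) le_rfl)
    have hsd : (symmDiff (S ^ n) (k • (S ^ n))).card
        ≤ (S ^ n \ k • (S ^ n)).card + (k • (S ^ n) \ S ^ n).card := by
      rw [symmDiff_def]
      exact Finset.card_union_le _ _
    have hle : ((S ^ n).card : ℝ) ≤ ((S ^ (n+1)).card : ℝ) := by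
      exact_mod_cast Finset.card_le_card hmono
    have hsubcast : (((S ^ (n+1)).card - (S ^ n).card : ℕ) : ℝ)
        = ((S ^ (n+1)).card : ℝ) - (S ^ n).card :=
      Nat.cast_sub (Finset.card_le_card hmono)
    have hA' : ((S ^ n \ k • (S ^ n)).card : ℝ)
        ≤ ((S ^ (n+1)).card : ℝ) - (S ^ n).card := by
      rw [← hsubcast]; exact_mod_cast hA
    have hB' : ((k • (S ^ n) \ S ^ n).card : ℝ)
        ≤ ((S ^ (n+1)).card : ℝ) - (S ^ n).card := by
      rw [← hsubcast]; exact_mod_cast hB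
    have hsd' : ((symmDiff (S ^ n) (k • (S ^ n))).card : ℝ)
        ≤ ((S ^ n \ k • (S ^ n)).card : ℝ) + ((k • (S ^ n) \ S ^ n).card : ℝ) := by
      exact_mod_cast hsd
    have := hcardpos n
    nlinarith
  refine ⟨h1, fun _ K hK ε hε => ?_⟩
  obtain ⟨n, hn⟩ := h1 ε hε
  exact ⟨S ^ n, ⟨1, Finset.one_mem_pow hS1⟩, fun k hk => hn k (hK hk)⟩
end

section
/- (Mean ergodic theorem for countable discrete amenable groups.) Let G be a countable group with a Fřlner sequence (F_n), let H be a Hilbert space, and let π : G → U(H) be a group homomorphism into the unitary operators on H. Let P denote the orthogonal projection of H onto the closed subspace { f ∈ H : π(γ) f = f for all γ ∈ G } of G-invariant vectors. Then for every f ∈ H, the averages (1/|F_n|) Σ_{γ ∈ F_n} π(γ⁻¹) f converge in norm to P f as n → ∞. -/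
/-!
Split `f = P f + (f - P f)`. Every average fixes `P f`. A vector orthogonal to all coboundaries
`π g v - v` is invariant (for an isometry `T`, `⟪T u, u⟫ = ‖u‖²` forces `T u = u`), so the
complement of the invariant vectors is the closed span of the coboundaries. Averaging a coboundary
over `F` leaves only a sum over `F ∆ g⁻¹ F`, which the Følner condition makes small; since the
averages are contractions, convergence to `0` passes from the span to its closure.
-/

open Filter Pointwise Finset Topology
open scoped NNReal symmDiff

section UniformlyBounded

variable {𝕜 E ι : Type*} [RCLike 𝕜] [NormedAddCommGroup E] {l : Filter ι}

theorem tendsto_zero_of_mem_topologicalClosure_span [NormedSpace 𝕜 E] {A : ι → E →L[𝕜] E}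
    (C : ℝ≥0) (hA : ∀ i, ‖A i‖₊ ≤ C) {S : Set E} (hS : ∀ y ∈ S, Tendsto (A · y) l (𝓝 0))
    {x : E} (hx : x ∈ (Submodule.span 𝕜 S).topologicalClosure) :
    Tendsto (A · x) l (𝓝 0) := by
  let W : Submodule 𝕜 E :=
    { carrier := {x | Tendsto (A · x) l (𝓝 0)}
      add_mem' := fun hx hy => by simpa using hx.add hy
      zero_mem' := by simpa using tendsto_const_nhds (x := (0 : E))
      smul_mem' := fun c _ hx => by simpa using hx.const_smul c }
  have hW : IsClosed (W : Set E) :=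
    ((LipschitzWith.uniformEquicontinuous (fun i => ⇑(A i)) C fun i =>
      (A i).lipschitz.weaken (hA i)).equicontinuous).isClosed_setOfPred_tendsto continuous_const
  exact Submodule.topologicalClosure_minimal _ (Submodule.span_le (p := W) |>.2 hS) hW hx

theorem tendsto_orthogonalProjectionOnto_of_orthogonal_le [InnerProductSpace 𝕜 E]
    {A : ι → E →L[𝕜] E} (C : ℝ≥0) (hA : ∀ i, ‖A i‖₊ ≤ C) (V : Submodule 𝕜 E)
    [V.HasOrthogonalProjection] (hV : ∀ i, ∀ v ∈ V, A i v = v) {S : Set E}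
    (hS : ∀ y ∈ S, Tendsto (A · y) l (𝓝 0))
    (hVS : Vᗮ ≤ (Submodule.span 𝕜 S).topologicalClosure) (x : E) :
    Tendsto (A · x) l (𝓝 (V.orthogonalProjectionOnto x)) := by
  have hperp : Tendsto (A · (x - V.orthogonalProjectionOnto x)) l (𝓝 0) :=
    tendsto_zero_of_mem_topologicalClosure_span C hA hS
      (hVS (V.sub_starProjection_mem_orthogonal x))
  have hfix (i : ι) : A i (V.orthogonalProjectionOnto x) = V.orthogonalProjectionOnto x :=
    hV i _ (V.orthogonalProjectionOnto x).2
  simpa only [map_sub, hfix, add_sub_cancel, add_zero] using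
    hperp.const_add (V.orthogonalProjectionOnto x : E)

end UniformlyBounded

theorem LinearIsometry.apply_eq_self_of_forall_inner_sub_eq_zero {𝕜 E : Type*} [RCLike 𝕜]
    [NormedAddCommGroup E] [InnerProductSpace 𝕜 E] (T : E →ₗᵢ[𝕜] E) {u : E}
    (hu : ∀ v, inner 𝕜 (T v - v) u = 0) : T u = u := by
  refine eq_of_norm_le_re_inner_eq_norm_sq (𝕜 := 𝕜) (T.norm_map u).le ?_
  rw [← inner_self_eq_norm_sq (𝕜 := 𝕜), ← sub_eq_zero, ← map_sub, ← inner_sub_left, hu,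
    map_zero]

theorem Finset.norm_sum_sub_sum_le {α E : Type*} [DecidableEq α] [SeminormedAddCommGroup E]
    (s t : Finset α) {f : α → E} {C : ℝ} (hf : ∀ a, ‖f a‖ ≤ C) :
    ‖∑ a ∈ t, f a - ∑ a ∈ s, f a‖ ≤ #(s ∆ t) * C := by
  have hcard : #(s ∆ t) = #(s \ t) + #(t \ s) := card_union_of_disjoint disjoint_sdiff_sdiff
  rw [← sum_sdiff_sub_sum_sdiff, hcard]
  calc _ ≤ ‖∑ a ∈ t \ s, f a‖ + ‖∑ a ∈ s \ t, f a‖ := norm_sub_le _ _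
    _ ≤ #(t \ s) * C + #(s \ t) * C := by
      gcongr <;> exact (norm_sum_le_of_le _ fun a _ => hf a).trans_eq (by simp)
    _ = _ := by push_cast; ring

section GroupAverage

variable {G 𝕜 E ι : Type*} [Group G] [RCLike 𝕜] [NormedAddCommGroup E] [NormedSpace 𝕜 E]

def groupAverage (π : G →* (E ≃ₗᵢ[𝕜] E)) (s : Finset G) : E →L[𝕜] E :=
  (#s : 𝕜)⁻¹ • ∑ γ ∈ s, ((π γ⁻¹).toContinuousLinearEquiv : E →L[𝕜] E)

variable (π : G →* (E ≃ₗᵢ[𝕜] E)) (s : Finset G)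

@[simp]
theorem groupAverage_apply (x : E) :
    groupAverage π s x = (#s : 𝕜)⁻¹ • ∑ γ ∈ s, π γ⁻¹ x := by
  simp only [groupAverage, FunLike.coe_smul, FunLike.coe_sum, Pi.smul_apply, Finset.sum_apply]
  rfl

theorem nnnorm_groupAverage_le : ‖groupAverage π s‖₊ ≤ 1 := by
  rw [← NNReal.coe_le_coe, coe_nnnorm, NNReal.coe_one]
  refine ContinuousLinearMap.opNorm_le_bound _ zero_le_one fun x => ?_
  calc ‖groupAverage π s x‖ ≤ (#s : ℝ)⁻¹ * (#s * ‖x‖) := by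
        rw [groupAverage_apply, norm_smul, norm_inv, RCLike.norm_natCast]
        gcongr
        exact (norm_sum_le_of_le _ fun γ _ => (π γ⁻¹).norm_map x |>.le).trans_eq (by simp)
    _ ≤ 1 * ‖x‖ := by
        rw [← mul_assoc]
        gcongr
        exact inv_mul_le_one_of_le₀ le_rfl (Nat.cast_nonneg _)

variable {π s}

theorem groupAverage_apply_of_forall_eq {x : E} (hs : s.Nonempty) (hx : ∀ γ, π γ x = x) :
    groupAverage π s x = x := by
  have hcard : (#s : 𝕜) ≠ 0 := Nat.cast_ne_zero.2 hs.card_ne_zero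
  rw [groupAverage_apply, sum_congr rfl fun γ _ => hx γ⁻¹, sum_const,
    ← Nat.cast_smul_eq_nsmul 𝕜, smul_smul, inv_mul_cancel₀ hcard, one_smul]

theorem norm_groupAverage_apply_sub_le [DecidableEq G] (g : G) (x : E) :
    ‖groupAverage π s (π g x - x)‖ ≤ #(s ∆ (g⁻¹ • s)) / #s * ‖x‖ := by
  have reindex : ∑ γ ∈ s, π γ⁻¹ (π g x) = ∑ δ ∈ g⁻¹ • s, π δ⁻¹ x := by
    rw [← image_smul, sum_image (MulAction.injective g⁻¹).injOn]
    refine sum_congr rfl fun γ _ => ?_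
    rw [smul_eq_mul, mul_inv_rev, inv_inv, map_mul, LinearIsometryEquiv.coe_mul,
      Function.comp_apply]
  rw [map_sub, groupAverage_apply, groupAverage_apply, reindex, ← smul_sub, norm_smul, norm_inv,
    RCLike.norm_natCast, div_mul_eq_mul_div, div_eq_inv_mul]
  gcongr
  exact norm_sum_sub_sum_le s _ fun δ => (π δ⁻¹).norm_map x |>.le

theorem tendsto_groupAverage_apply_sub [DecidableEq G] {l : Filter ι} {F : ι → Finset G} (g : G)
    (hF : Tendsto (fun i => (#(F i ∆ (g⁻¹ • F i)) : ℝ) / #(F i)) l (𝓝 0)) (x : E) :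
    Tendsto (fun i => groupAverage π (F i) (π g x - x)) l (𝓝 0) :=
  squeeze_zero_norm (fun _ => norm_groupAverage_apply_sub_le g x)
    (by simpa using hF.mul_const ‖x‖)

end GroupAverage

theorem stmt_12_general {G : Type*} [Group G] [DecidableEq G]
    {H : Type*} [NormedAddCommGroup H] [InnerProductSpace ℂ H] [CompleteSpace H]
    (F : ℕ → Finset G) (hF : ∀ n, (F n).Nonempty)
    (hFolner : ∀ g : G,
      Tendsto (fun n => ((symmDiff (F n) (g • F n)).card : ℝ) / (F n).card) atTop (nhds 0))
    (π : G →* (H ≃ₗᵢ[ℂ] H))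
    (V : Submodule ℂ H) (hV : ∀ f : H, f ∈ V ↔ ∀ γ : G, π γ f = f)
    [V.HasOrthogonalProjection] :
    ∀ f : H,
      Tendsto (fun n => ((F n).card : ℂ)⁻¹ • ∑ γ ∈ F n, π γ⁻¹ f)
        atTop (nhds (V.orthogonalProjectionOnto f : H)) := by
  set S : Set H := Set.range fun p : G × H => π p.1 p.2 - p.2
  have hS : ∀ y ∈ S, Tendsto (fun n => groupAverage π (F n) y) atTop (𝓝 0) := by
    rintro _ ⟨⟨g, v⟩, rfl⟩
    exact tendsto_groupAverage_apply_sub g (hFolner g⁻¹) v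
  have hVS : Vᗮ ≤ (Submodule.span ℂ S).topologicalClosure := by
    rw [← Submodule.orthogonal_orthogonal_eq_closure]
    refine Submodule.orthogonal_le fun u hu => (hV u).2 fun g => ?_
    exact (π g).toLinearIsometry.apply_eq_self_of_forall_inner_sub_eq_zero fun v =>
      (Submodule.mem_orthogonal _ u).1 hu _ (Submodule.subset_span ⟨(g, v), rfl⟩)
  intro f
  simpa only [groupAverage_apply] using
    tendsto_orthogonalProjectionOnto_of_orthogonal_le 1 (fun n => nnnorm_groupAverage_le π (F n))
      V (fun n v hv => groupAverage_apply_of_forall_eq (hF n) ((hV v).1 hv)) hS hVS f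

/-- Mean ergodic theorem for countable discrete amenable groups acting unitarily on a
Hilbert space: the Følner averages converge to the orthogonal projection onto the
subspace of invariant vectors. -/
theorem stmt_12 {G : Type*} [Group G] [Countable G] [DecidableEq G]
    {H : Type*} [NormedAddCommGroup H] [InnerProductSpace ℂ H] [CompleteSpace H]
    (F : ℕ → Finset G) (hF : ∀ n, (F n).Nonempty)
    (hFolner : ∀ g : G,
      Tendsto (fun n => ((symmDiff (F n) (g • F n)).card : ℝ) / (F n).card) atTop (nhds 0))
    (π : G →* (H ≃ₗᵢ[ℂ] H))
    (V : Submodule ℂ H) (hV : ∀ f : H, f ∈ V ↔ ∀ γ : G, π γ f = f)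
    [V.HasOrthogonalProjection] :
    ∀ f : H,
      Tendsto (fun n => ((F n).card : ℂ)⁻¹ • ∑ γ ∈ F n, π γ⁻¹ f)
        atTop (nhds (V.orthogonalProjectionOnto f : H)) :=
  stmt_12_general F hF hFolner π V hV
end

section
/- Let G be a noncompact, locally compact, second countable topological group with left Haar measure m, which admits a Fřlner sequence (F_n) of compact subsets of positive finite Haar measure. Let π be the representation of G on L²(G, m) given by (π(g)f)(x) = f(g x), and define A_n f := (1/m(F_n)) ∫_{F_n} π(h⁻¹) f dm(h) (Bochner integral in L²(G,m)). Then the family { (A_n f)_n : f ∈ L²(G,m), ‖f‖₂ ≤ 1 } has no uniform rate of convergence: there is no function r : (0,∞) → ℕ such that for every ε > 0, every f ∈ L²(G,m) with ‖f‖₂ ≤ 1, and all n, m ≥ r(ε), one has ‖A_n f − A_m f‖₂ < ε. -/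
open MeasureTheory Filter Pointwise Set Topology
open scoped RealInnerProductSpace symmDiff ENNReal

set_option maxHeartbeats 1000000

/-- Pick points separated w.r.t. compact-valued "forbidden" sets. -/
lemma aux_sep {G : Type*} [TopologicalSpace G] [NoncompactSpace G] [Inhabited G]
    (W : G → Set G) (hW : ∀ g, IsCompact (W g)) :
    ∀ p : ℕ, ∃ k : ℕ → G, ∀ i j, j < i → i < p → k i ∉ W (k j) := by
  intro p
  induction p with
  | zero => exact ⟨fun _ => default, by omega⟩
  | succ q ih =>
    obtain ⟨k, hk⟩ := ih
    have hC : IsCompact (⋃ j ∈ Finset.range q, W (k j)) :=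
      (Finset.range q).isCompact_biUnion (fun j _ => hW (k j))
    obtain ⟨g, hg⟩ : ∃ g, g ∉ ⋃ j ∈ Finset.range q, W (k j) := by
      have := hC.ne_univ
      rw [Set.ne_univ_iff_exists_notMem] at this
      exact this
    refine ⟨Function.update k q g, fun i j hji hiq => ?_⟩
    rcases Nat.lt_succ_iff_lt_or_eq.1 hiq with hi | rfl
    · rw [Function.update_of_ne (by omega), Function.update_of_ne (by omega)]
      exact hk i j hji hi
    · rw [Function.update_self, Function.update_of_ne (by omega)]
      intro hmem
      exact hg (Set.mem_biUnion (Finset.mem_range.2 hji) hmem)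

/-- Superadditivity of outer measure over pairwise disjoint measurable pieces. -/
lemma aux_sum_inter_le {α ι : Type*} [MeasurableSpace α] (μ : Measure α) (T : Set α)
    (s : Finset ι) (A : ι → Set α) (hmeas : ∀ i ∈ s, MeasurableSet (A i))
    (hdisj : ∀ i ∈ s, ∀ j ∈ s, i ≠ j → Disjoint (A i) (A j)) :
    ∑ i ∈ s, μ (T ∩ A i) ≤ μ T := by
  classical
  induction s using Finset.induction_on generalizing T with
  | empty => simp
  | @insert a s ha ih =>
    rw [Finset.sum_insert ha]
    have h1 : μ (T ∩ A a) + μ (T \ A a) = μ T :=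
      measure_inter_add_diff T (hmeas a (Finset.mem_insert_self _ _))
    have h2 : ∑ i ∈ s, μ (T ∩ A i) = ∑ i ∈ s, μ ((T \ A a) ∩ A i) := by
      refine Finset.sum_congr rfl fun i hi => ?_
      congr 1
      have hd : Disjoint (A a) (A i) :=
        hdisj a (Finset.mem_insert_self _ _) i (Finset.mem_insert_of_mem hi)
          (by rintro rfl; exact ha hi)
      ext x
      simp only [Set.mem_inter_iff, Set.mem_diff]
      exact ⟨fun ⟨hT, hAi⟩ => ⟨⟨hT, fun hAa => hd.ne_of_mem hAa hAi rfl⟩, hAi⟩,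
        fun ⟨⟨hT, _⟩, hAi⟩ => ⟨hT, hAi⟩⟩
    rw [h2]
    calc μ (T ∩ A a) + ∑ i ∈ s, μ ((T \ A a) ∩ A i)
        ≤ μ (T ∩ A a) + μ (T \ A a) := by
          gcongr
          exact ih _ (fun i hi => hmeas i (Finset.mem_insert_of_mem hi))
            (fun i hi j hj hij => hdisj i (Finset.mem_insert_of_mem hi) j
              (Finset.mem_insert_of_mem hj) hij)
      _ = μ T := h1

/-- Continuity of the regular representation. -/
lemma aux_cont {G : Type*} [Group G] [TopologicalSpace G] [IsTopologicalGroup G]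
    [LocallyCompactSpace G] [SecondCountableTopology G]
    [MeasurableSpace G] [BorelSpace G]
    (μ : Measure G) [μ.IsHaarMeasure]
    (π : G → (Lp ℝ 2 μ ≃ₗᵢ[ℝ] Lp ℝ 2 μ))
    (hπ : ∀ (g : G) (f : Lp ℝ 2 μ), (π g f : G → ℝ) =ᵐ[μ] fun x => f (g * x))
    (f : Lp ℝ 2 μ) :
    Continuous fun g : G => (π g f : Lp ℝ 2 μ) := by
  set Φ : C(G, C(G, G)) := ContinuousMap.curry ⟨fun p : G × G => p.1 * p.2, continuous_mul⟩ with hΦ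
  have hgm : ∀ g : G, MeasurePreserving (Φ g) μ μ := fun g => measurePreserving_mul_left μ g
  have key : ∀ g : G, (π g f : Lp ℝ 2 μ) = Lp.compMeasurePreserving (Φ g) (hgm g) f := by
    intro g
    apply Lp.ext
    refine (hπ g f).trans ?_
    exact (Lp.coeFn_compMeasurePreserving f (hgm g)).symm
  have : Continuous fun g : G =>
      Lp.compMeasurePreserving (Φ g) (hgm g) f :=
    Continuous.compMeasurePreservingLp continuous_const Φ.continuous hgm (by norm_num)
  simpa only [key] using this

/-- The regular representation of a noncompact amenable lcsc group on `L²(G)` admits no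
uniform rate of convergence of its Følner ergodic averages. -/
theorem stmt_13 {G : Type*} [Group G] [TopologicalSpace G] [IsTopologicalGroup G]
    [LocallyCompactSpace G] [SecondCountableTopology G] [NoncompactSpace G]
    [MeasurableSpace G] [BorelSpace G]
    (μ : Measure G) [μ.IsHaarMeasure]
    (F : ℕ → Set G) (hFcpt : ∀ n, IsCompact (F n))
    (hFpos : ∀ n, 0 < μ (F n)) (hFfin : ∀ n, μ (F n) < ⊤)
    (hFolner : ∀ K : Set G, IsCompact K → 0 < μ K → ∀ ε : ℝ, 0 < ε → ∃ N : ℕ, ∀ n ≥ N,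
      ∃ K' ⊆ K, MeasurableSet K' ∧ μ (K \ K') < ENNReal.ofReal ε * μ K ∧
        ∀ k ∈ K', μ (symmDiff (F n) (k • F n)) < ENNReal.ofReal ε * μ (F n))
    (π : G → (Lp ℝ 2 μ ≃ₗᵢ[ℝ] Lp ℝ 2 μ))
    (hπ : ∀ (g : G) (f : Lp ℝ 2 μ), (π g f : G → ℝ) =ᵐ[μ] fun x => f (g * x)) :
    ¬ ∃ r : ℝ → ℕ, ∀ ε : ℝ, 0 < ε → ∀ f : Lp ℝ 2 μ, ‖f‖ ≤ 1 →
      ∀ n m : ℕ, r ε ≤ n → r ε ≤ m →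
        ‖(μ (F n)).toReal⁻¹ • ∫ h in F n, π h⁻¹ f ∂μ -
          (μ (F m)).toReal⁻¹ • ∫ h in F m, π h⁻¹ f ∂μ‖ < ε := by
  classical
  rintro ⟨r, hr⟩
  set N := r (1/2) with hNdef
  -- basic facts
  haveI : Inhabited G := ⟨1⟩
  have hcontf : ∀ f : Lp ℝ 2 μ, Continuous fun h : G => (π h⁻¹ f : Lp ℝ 2 μ) :=
    fun f => (aux_cont μ π hπ f).comp continuous_inv
  have hfinres : ∀ s : Set G, μ s < ⊤ → IsFiniteMeasure (μ.restrict s) :=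
    fun s hs => ⟨by rw [Measure.restrict_apply_univ]; exact hs⟩
  have hint : ∀ (f : Lp ℝ 2 μ) (n : ℕ),
      Integrable (fun h => (π h⁻¹ f : Lp ℝ 2 μ)) (μ.restrict (F n)) := by
    intro f n
    haveI := hfinres (F n) (hFfin n)
    refine Integrable.mono' (integrable_const ‖f‖) (hcontf f).aestronglyMeasurable ?_
    exact Filter.Eventually.of_forall fun h => le_of_eq ((π h⁻¹).norm_map f)
  -- Step A : build an almost `F N`-invariant function f
  obtain ⟨N₁, hN₁⟩ := hFolner (F N) (hFcpt N) (hFpos N) (1/256) (by norm_num)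
  set m := max N N₁ with hmdef
  obtain ⟨K', hK'sub, hK'meas, hK'small, hK'inv⟩ := hN₁ m (le_max_right _ _)
  set S := closure (F m) with hSdef
  have hSmeas : MeasurableSet S := isClosed_closure.measurableSet
  have hSeq : μ S = μ (F m) := (hFcpt m).measure_closure μ
  have hSpos : 0 < μ S := hSeq ▸ hFpos m
  have hSfin : μ S ≠ ⊤ := by rw [hSeq]; exact (hFfin m).ne
  have hFmS : F m ⊆ S := subset_closure
  have hScomp : IsCompact S := (hFcpt m).closure
  have hSne : S.Nonempty := nonempty_of_measure_ne_zero hSpos.ne'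
  set a := (μ S).toReal with hadef
  have hapos : 0 < a := ENNReal.toReal_pos hSpos.ne' hSfin
  set c : ℝ := (a ^ (1/(2:ℝ)))⁻¹ with hcdef
  have hrpos : 0 < a ^ (1/(2:ℝ)) := Real.rpow_pos_of_pos hapos _
  have hcpos : 0 < c := inv_pos.2 hrpos
  have hc2 : c^2 * a = 1 := by
    have h2 : a ^ (1/(2:ℝ)) * a ^ (1/(2:ℝ)) = a := by
      rw [← Real.rpow_add hapos]; norm_num
    rw [hcdef]
    field_simp
    rw [sq]
    exact h2.symm
  set f₀ : Lp ℝ 2 μ := indicatorConstLp 2 hSmeas hSfin (1:ℝ) with hf₀def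
  set f : Lp ℝ 2 μ := c • f₀ with hfdef
  have hnf : ‖f‖ = 1 := by
    rw [hfdef, norm_smul, norm_indicatorConstLp two_ne_zero ENNReal.ofNat_ne_top]
    simp only [norm_one, one_mul, Real.norm_eq_abs, abs_of_pos hcpos]
    rw [hcdef]
    norm_num
    exact inv_mul_cancel₀ hrpos.ne'
  -- the basic inner product computation
  have hSsmul_meas : ∀ g : G, MeasurableSet (g • S) :=
    fun g => (isClosed_closure.smul g).measurableSet
  have hcoe : ∀ h : G, (π h⁻¹ f₀ : G → ℝ) =ᵐ[μ] (h • S).indicator (fun _ => (1:ℝ)) := by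
    intro h
    refine (hπ h⁻¹ f₀).trans ?_
    have h2 : (fun x => (f₀ : G → ℝ) (h⁻¹ * x))
        =ᵐ[μ] fun x => S.indicator (fun _ => (1:ℝ)) (h⁻¹ * x) := by
      have hmp := measurePreserving_mul_left μ h⁻¹
      have := ae_eq_comp (f := fun x : G => h⁻¹ * x) hmp.measurable.aemeasurable
        (g := (f₀ : G → ℝ)) (g' := S.indicator (fun _ => (1:ℝ)))
        (by rw [hmp.map_eq]; exact indicatorConstLp_coeFn)
      exact this
    refine h2.trans (Filter.Eventually.of_forall fun x => ?_)
    simp only [Set.indicator_apply, Set.mem_smul_set_iff_inv_smul_mem, smul_eq_mul]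
  have hinner0 : ∀ h : G, ⟪(π h⁻¹ f₀ : Lp ℝ 2 μ), f₀⟫ = (μ ((h • S) ∩ S)).toReal := by
    intro h
    rw [L2.inner_def]
    have hmeas' : MeasurableSet ((h • S) ∩ S) := (hSsmul_meas h).inter hSmeas
    have : ∫ x, ⟪(π h⁻¹ f₀ : G → ℝ) x, (f₀ : G → ℝ) x⟫ ∂μ
        = ∫ x, ((h • S) ∩ S).indicator (fun _ => (1:ℝ)) x ∂μ := by
      refine integral_congr_ae ?_
      filter_upwards [hcoe h, indicatorConstLp_coeFn (E := ℝ) (p := 2) (μ := μ)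
        (hs := hSmeas) (hμs := hSfin) (c := (1:ℝ))] with x hx hx'
      rw [RCLike.inner_apply, starRingEnd_apply, star_trivial, hx, hx']
      by_cases hA : x ∈ h • S <;> by_cases hB : x ∈ S <;>
        simp [Set.indicator_of_mem, Set.indicator_of_notMem, hA, hB]
    rw [this, integral_indicator_const (1:ℝ) hmeas']
    simp [measureReal_def]
  have hinner : ∀ h : G, ⟪(π h⁻¹ f : Lp ℝ 2 μ), f⟫ = c^2 * (μ ((h • S) ∩ S)).toReal := by
    intro h
    rw [hfdef, (π h⁻¹).map_smul, real_inner_smul_left, real_inner_smul_right, hinner0]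
    ring
  have hnormsub : ∀ h : G, ‖(π h⁻¹ f : Lp ℝ 2 μ) - f‖^2
      = 2 - 2*(c^2 * (μ ((h • S) ∩ S)).toReal) := by
    intro h
    rw [norm_sub_sq_real, (π h⁻¹).norm_map, hnf, hinner]
    ring
  -- Step A estimate for good h
  have hK'bound : ∀ h ∈ K', ‖(π h⁻¹ f : Lp ℝ 2 μ) - f‖ ≤ 1/8 := by
    intro h hh
    have hsymm := hK'inv h hh
    -- μ (S \ h•S) ≤ μ (F m \ h•F m)
    have h1 : μ (S ∩ h • S) + μ (S \ h • S) = μ S := measure_inter_add_diff S (hSsmul_meas h)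
    have h2 : μ (F m) ≤ μ (F m ∩ h • F m) + μ (F m \ h • F m) := by
      conv_lhs => rw [← Set.inter_union_diff (F m) (h • F m)]
      exact measure_union_le _ _
    have h3 : μ (F m ∩ h • F m) ≤ μ (S ∩ h • S) :=
      measure_mono (Set.inter_subset_inter hFmS (Set.smul_set_mono hFmS))
    have h4 : μ (S \ h • S) ≤ μ (F m \ h • F m) := by
      have h5 : μ (S ∩ h • S) + μ (S \ h • S) ≤ μ (S ∩ h • S) + μ (F m \ h • F m) := by
        rw [h1, hSeq]
        exact h2.trans (add_le_add h3 le_rfl)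
      exact ENNReal.le_of_add_le_add_left
        ((measure_mono Set.inter_subset_left).trans_lt hSfin.lt_top).ne h5
    have h5 : μ (F m \ h • F m) ≤ μ (symmDiff (F m) (h • F m)) :=
      measure_mono (by rw [Set.symmDiff_def]; exact Set.subset_union_left)
    have h6 : μ (S \ h • S) < ENNReal.ofReal (1/256) * μ S := by
      rw [hSeq]; exact lt_of_le_of_lt (h4.trans h5) hsymm
    have hfin1 : ENNReal.ofReal (1/256) * μ S ≠ ⊤ := ENNReal.mul_ne_top ENNReal.ofReal_ne_top hSfin
    have h7 : (μ (S \ h • S)).toReal ≤ (1/256) * a := by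
      have := ENNReal.toReal_mono hfin1 h6.le
      rwa [ENNReal.toReal_mul, ENNReal.toReal_ofReal (by norm_num : (0:ℝ) ≤ 1/256)] at this
    have h8 : (μ (S ∩ h • S)).toReal + (μ (S \ h • S)).toReal = a := by
      rw [← ENNReal.toReal_add ((measure_mono Set.inter_subset_left).trans_lt hSfin.lt_top).ne
        ((measure_mono Set.diff_subset).trans_lt hSfin.lt_top).ne, h1]
    have h9 : (μ (S ∩ (h • S))).toReal = (μ ((h • S) ∩ S)).toReal := by rw [Set.inter_comm]
    have h10 := hnormsub h
    have ht : (μ ((h • S) ∩ S)).toReal = a - (μ (S \ h • S)).toReal := by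
      rw [← h9]; linarith [h8]
    have hcd : c^2 * (μ (S \ h • S)).toReal ≤ 1/256 := by
      have h11 : c^2 * (μ (S \ h • S)).toReal ≤ c^2 * ((1/256) * a) :=
        mul_le_mul_of_nonneg_left h7 (sq_nonneg c)
      have h12 : c^2 * ((1/256) * a) = (1/256) * (c^2 * a) := by ring
      rw [h12, hc2] at h11
      linarith
    have hsq : ‖(π h⁻¹ f : Lp ℝ 2 μ) - f‖^2 ≤ (1/8)^2 := by
      rw [h10, ht]
      nlinarith [hc2, hcd]
    exact le_of_pow_le_pow_left₀ two_ne_zero (by norm_num) hsq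
  -- Step A conclusion
  have hAN : ‖((μ (F N)).toReal⁻¹ • ∫ h in F N, (π h⁻¹ f : Lp ℝ 2 μ) ∂μ) - f‖ ≤ 1/4 := by
    haveI := hfinres (F N) (hFfin N)
    have htR : (0:ℝ) < (μ (F N)).toReal := ENNReal.toReal_pos (hFpos N).ne' (hFfin N).ne
    have hintc : Integrable (fun _ : G => f) (μ.restrict (F N)) := integrable_const f
    have hkey : ((μ (F N)).toReal⁻¹ • ∫ h in F N, (π h⁻¹ f : Lp ℝ 2 μ) ∂μ) - f
        = (μ (F N)).toReal⁻¹ • ∫ h in F N, ((π h⁻¹ f : Lp ℝ 2 μ) - f) ∂μ := by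
      rw [integral_sub (hint f N) hintc, integral_const, measureReal_restrict_apply_univ, measureReal_def,
        smul_sub, smul_smul, inv_mul_cancel₀ htR.ne', one_smul]
    rw [hkey, norm_smul, Real.norm_eq_abs, abs_of_pos (inv_pos.2 htR)]
    set φ : G → ℝ := fun h => 1/8 + 2 * (K'ᶜ).indicator (fun _ => (1:ℝ)) h with hφ
    have hφint2 : Integrable (fun h => 2 * (K'ᶜ).indicator (fun _ => (1:ℝ)) h)
        (μ.restrict (F N)) :=
      Integrable.const_mul ((integrable_const (1:ℝ)).indicator hK'meas.compl) 2
    have hφint : Integrable φ (μ.restrict (F N)) := (integrable_const _).add hφint2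
    have hbnd : ∀ h : G, ‖(π h⁻¹ f : Lp ℝ 2 μ) - f‖ ≤ φ h := by
      intro h
      by_cases hh : h ∈ K'
      · have h0 := hK'bound h hh
        have h1 : φ h = 1/8 := by
          rw [hφ]
          simp only [Set.indicator_of_notMem (by simpa using hh : h ∉ K'ᶜ)]
          norm_num
        rw [h1]; exact h0
      · have h1 : ‖(π h⁻¹ f : Lp ℝ 2 μ) - f‖ ≤ 2 := by
          calc ‖(π h⁻¹ f : Lp ℝ 2 μ) - f‖ ≤ ‖(π h⁻¹ f : Lp ℝ 2 μ)‖ + ‖f‖ := norm_sub_le _ _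
            _ = 2 := by rw [(π h⁻¹).norm_map, hnf]; norm_num
        have h2 : φ h = 1/8 + 2 := by
          rw [hφ]
          simp only [Set.indicator_of_mem (by simpa using hh : h ∈ K'ᶜ)]
          norm_num
        rw [h2]; linarith
    have hintnorm : ‖∫ h in F N, ((π h⁻¹ f : Lp ℝ 2 μ) - f) ∂μ‖ ≤ ∫ h in F N, φ h ∂μ := by
      refine (norm_integral_le_integral_norm _).trans ?_
      exact integral_mono ((hint f N).sub hintc).norm hφint hbnd
    have hdiffsmall : ((μ.restrict (F N)) K'ᶜ).toReal ≤ (1/256) * (μ (F N)).toReal := by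
      have he : (μ.restrict (F N)) K'ᶜ = μ (F N \ K') := by
        rw [Measure.restrict_apply hK'meas.compl, Set.inter_comm, Set.diff_eq]
      rw [he]
      have hfin1 : ENNReal.ofReal (1/256) * μ (F N) ≠ ⊤ :=
        ENNReal.mul_ne_top ENNReal.ofReal_ne_top (hFfin N).ne
      have := ENNReal.toReal_mono hfin1 hK'small.le
      rwa [ENNReal.toReal_mul, ENNReal.toReal_ofReal (by norm_num : (0:ℝ) ≤ 1/256)] at this
    have hφval : ∫ h in F N, φ h ∂μ
        ≤ (1/8) * (μ (F N)).toReal + 2 * ((1/256) * (μ (F N)).toReal) := by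
      rw [hφ, integral_add (integrable_const _) hφint2, integral_const,
        measureReal_restrict_apply_univ, measureReal_def, MeasureTheory.integral_const_mul,
        integral_indicator_const (1:ℝ) hK'meas.compl, measureReal_def, smul_eq_mul, smul_eq_mul, mul_one]
      have := hdiffsmall
      nlinarith [htR]
    calc (μ (F N)).toReal⁻¹ * ‖∫ h in F N, ((π h⁻¹ f : Lp ℝ 2 μ) - f) ∂μ‖
        ≤ (μ (F N)).toReal⁻¹ *
          ((1/8) * (μ (F N)).toReal + 2 * ((1/256) * (μ (F N)).toReal)) :=
          mul_le_mul_of_nonneg_left (hintnorm.trans hφval) (inv_nonneg.2 htR.le)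
      _ = 1/8 + 1/128 := by field_simp; ring
      _ ≤ 1/4 := by norm_num
  -- Step B : find n ≥ N with small intersection with Q
  set Q := closure (S * S⁻¹) with hQdef
  have hQcomp : IsCompact Q := (hScomp.mul hScomp.inv).closure
  have hQmeas : MeasurableSet Q := isClosed_closure.measurableSet
  have hSSQ : S * S⁻¹ ⊆ Q := subset_closure
  have hQone : (1:G) ∈ S * S⁻¹ := by
    obtain ⟨s₀, hs₀⟩ := hSne
    exact ⟨s₀, hs₀, s₀⁻¹, Set.inv_mem_inv.2 hs₀, mul_inv_cancel s₀⟩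
  have stepB : ∃ n : ℕ, N ≤ n ∧ μ (F n ∩ Q) ≤ (8:ℝ≥0∞)⁻¹ * μ (F n) := by
    by_contra hB
    push_neg at hB
    -- conversion facts
    have h16 : ENNReal.ofReal (1/16:ℝ) = (16:ℝ≥0∞)⁻¹ := by
      rw [one_div, ENNReal.ofReal_inv_of_pos (by norm_num)]
      norm_num
    have h8 : (16:ℝ≥0∞)⁻¹ + 16⁻¹ = 8⁻¹ := by
      have e1 : ENNReal.ofReal (1/8:ℝ) = (8:ℝ≥0∞)⁻¹ := by
        rw [one_div, ENNReal.ofReal_inv_of_pos (by norm_num)]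
        norm_num
      rw [← h16, ← e1, ← ENNReal.ofReal_add (by norm_num) (by norm_num)]
      norm_num
    -- a compact closed neighborhood of 1
    obtain ⟨V₀, hV₀c, hV₀n⟩ := exists_compact_mem_nhds (1 : G)
    set V := closure V₀ with hVdef
    have hVc : IsCompact V := hV₀c.closure
    have hVcl : IsClosed V := isClosed_closure
    have hVn : V ∈ 𝓝 (1:G) := Filter.mem_of_superset hV₀n subset_closure
    have hVpos : 0 < μ V :=
      μ.measure_pos_of_nonempty_interior ⟨1, mem_interior_iff_mem_nhds.2 hVn⟩
    have hVfin : μ V ≠ ⊤ := hVc.measure_lt_top.ne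
    have hVmeas : MeasurableSet V := hVcl.measurableSet
    -- separated points
    set W : G → Set G := fun g => (Q * Q⁻¹) * ({g} * (V * V⁻¹)) with hWdef
    have hWc : ∀ g, IsCompact (W g) :=
      fun g => ((hQcomp.mul hQcomp.inv).mul (isCompact_singleton.mul (hVc.mul hVc.inv)))
    obtain ⟨k, hk⟩ := aux_sep W hWc 32
    have hQQ1 : (1:G) ∈ Q * Q⁻¹ := by
      refine ⟨1, hSSQ hQone, 1, ?_, by simp⟩
      simpa using hSSQ hQone
    -- disjointness of the balls
    have claim1 : ∀ i j, i < 32 → j < 32 → i ≠ j → Disjoint (k i • V) (k j • V) := by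
      have core : ∀ i j, j < i → i < 32 → Disjoint (k i • V) (k j • V) := by
        intro i j hji hi
        rw [Set.disjoint_left]
        rintro x hx1 hx2
        obtain ⟨v, hv, rfl⟩ := hx1
        obtain ⟨w, hw, heq⟩ := hx2
        apply hk i j hji hi
        have hki : k i = (1:G) * (k j * (w * v⁻¹)) := by
          simp only [smul_eq_mul] at heq
          calc k i = (k i * v) * v⁻¹ := by group
            _ = (k j * w) * v⁻¹ := by rw [heq]
            _ = (1:G) * (k j * (w * v⁻¹)) := by group
        rw [hWdef]
        rw [hki]
        exact Set.mul_mem_mul hQQ1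
          (Set.mul_mem_mul (Set.mem_singleton _) (Set.mul_mem_mul hw (Set.inv_mem_inv.2 hv)))
      intro i j hi hj hij
      rcases lt_or_gt_of_ne hij with h | h
      · exact (core j i h hj).symm
      · exact core i j h hi
    -- disjointness of the translated Q's
    have claim2 : ∀ i j, i < 32 → j < 32 → i ≠ j → ∀ x y, x ∈ k i • V → y ∈ k j • V →
        Disjoint (x⁻¹ • Q) (y⁻¹ • Q) := by
      have core : ∀ i j, j < i → i < 32 → ∀ x y, x ∈ k i • V → y ∈ k j • V →
          Disjoint (x⁻¹ • Q) (y⁻¹ • Q) := by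
        intro i j hji hi x y hx hy
        rw [Set.disjoint_left]
        rintro z hz1 hz2
        obtain ⟨q, hq, rfl⟩ := hz1
        obtain ⟨q', hq', heq⟩ := hz2
        obtain ⟨v, hv, rfl⟩ := hx
        obtain ⟨w, hw, rfl⟩ := hy
        apply hk i j hji hi
        simp only [smul_eq_mul] at heq
        have hq'' : q' = (k j * w) * ((k i * v)⁻¹ * q) := by
          rw [← heq]
          group
        have hki : k i = (q * q'⁻¹) * (k j * (w * v⁻¹)) := by
          rw [hq'']
          group
        rw [hWdef, hki]
        exact Set.mul_mem_mul (Set.mul_mem_mul hq (Set.inv_mem_inv.2 hq'))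
          (Set.mul_mem_mul (Set.mem_singleton _) (Set.mul_mem_mul hw (Set.inv_mem_inv.2 hv)))
      intro i j hi hj hij x y hx hy
      rcases lt_or_gt_of_ne hij with h | h
      · exact (core j i h hj y x hy hx).symm
      · exact core i j h hi x y hx hy
    -- the Folner set K
    set K : Set G := ⋃ i ∈ Finset.range 32, k i • V with hKdef
    have hKc : IsCompact K := (Finset.range 32).isCompact_biUnion (fun i _ => hVc.smul (k i))
    have hKVmeas : ∀ i : ℕ, MeasurableSet (k i • V) := fun i => (hVcl.smul (k i)).measurableSet
    have hKle : μ K ≤ 32 * μ V := by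
      refine (measure_biUnion_finset_le _ _).trans ?_
      have : ∀ i ∈ Finset.range 32, μ (k i • V) = μ V := fun i _ => measure_smul μ (k i) V
      rw [Finset.sum_congr rfl this, Finset.sum_const, Finset.card_range, nsmul_eq_mul]
      norm_num
    have hKpos : 0 < μ K := by
      refine lt_of_lt_of_le (by rw [measure_smul]; exact hVpos : 0 < μ (k 0 • V)) (measure_mono ?_)
      intro x hx
      exact Set.mem_biUnion (Finset.mem_range.2 (by norm_num : 0 < 32)) hx
    obtain ⟨N₂, hN₂⟩ := hFolner K hKc hKpos (1/16) (by norm_num)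
    set n := max N N₂ with hndef
    obtain ⟨K'', hsub'', hmeas'', hsmall'', hinv''⟩ := hN₂ n (le_max_right _ _)
    have hQbig := hB n (le_max_left _ _)
    -- bad indices
    set bad : Finset ℕ := (Finset.range 32).filter (fun i => ¬ ((k i • V) ∩ K'').Nonempty)
      with hbaddef
    have hbadsub : ∀ i ∈ bad, (k i • V) ⊆ K \ K'' := by
      intro i hi x hx
      simp only [hbaddef, Finset.mem_filter, Finset.mem_range] at hi
      exact ⟨Set.mem_biUnion (Finset.mem_range.2 hi.1) hx, fun hx' => hi.2 ⟨x, hx, hx'⟩⟩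
    have hbadcard : (bad.card : ℝ≥0∞) * μ V ≤ μ (K \ K'') := by
      have hdisjU : μ (⋃ i ∈ bad, k i • V) = ∑ i ∈ bad, μ (k i • V) := by
        refine measure_biUnion_finset ?_ (fun i _ => hKVmeas i)
        intro i hi j hj hij
        simp only [hbaddef, Finset.coe_filter, Set.mem_setOf_eq, Finset.mem_range] at hi hj
        exact claim1 i j hi.1 hj.1 hij
      have hsub2 : ⋃ i ∈ bad, k i • V ⊆ K \ K'' := Set.iUnion₂_subset hbadsub
      have hsumv : ∑ i ∈ bad, μ (k i • V) = (bad.card : ℝ≥0∞) * μ V := by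
        have : ∀ i ∈ bad, μ (k i • V) = μ V := fun i _ => measure_smul μ (k i) V
        rw [Finset.sum_congr rfl this, Finset.sum_const, nsmul_eq_mul]
      calc (bad.card : ℝ≥0∞) * μ V = μ (⋃ i ∈ bad, k i • V) := by rw [hdisjU, hsumv]
        _ ≤ μ (K \ K'') := measure_mono hsub2
    have hbadlt : μ (K \ K'') < 2 * μ V := by
      have h162 : (16:ℝ≥0∞)⁻¹ * 32 = 2 := by
        rw [show (32:ℝ≥0∞) = 16 * 2 by norm_num, ← mul_assoc,
          ENNReal.inv_mul_cancel (by norm_num) (by norm_num), one_mul]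
      calc μ (K \ K'') < ENNReal.ofReal (1/16) * μ K := hsmall''
        _ ≤ (16:ℝ≥0∞)⁻¹ * (32 * μ V) := by rw [h16]; exact mul_le_mul_right hKle _
        _ = 2 * μ V := by rw [← mul_assoc, h162]
    have hbadcard2 : bad.card ≤ 1 := by
      by_contra hbc
      push_neg at hbc
      have h2c : (2:ℝ≥0∞) ≤ (bad.card : ℝ≥0∞) := by exact_mod_cast hbc
      have := lt_of_le_of_lt ((mul_le_mul_left h2c (μ V)).trans hbadcard) hbadlt
      exact lt_irrefl _ this
    -- good indices
    set good : Finset ℕ := (Finset.range 32).filter (fun i => ((k i • V) ∩ K'').Nonempty)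
      with hgooddef
    have hgoodcard : 31 ≤ good.card := by
      have hcards := Finset.card_filter_add_card_filter_not
        (s := Finset.range 32) (p := fun i => ((k i • V) ∩ K'').Nonempty)
      rw [Finset.card_range, ← hgooddef, ← hbaddef] at hcards
      omega
    set ψ : ℕ → G := fun i => if h : ((k i • V) ∩ K'').Nonempty then h.choose else 1 with hψdef
    have hψmem : ∀ i ∈ good, ψ i ∈ (k i • V) ∩ K'' := by
      intro i hi
      simp only [hgooddef, Finset.mem_filter] at hi
      rw [hψdef]
      simp only [dif_pos hi.2]
      exact hi.2.choose_spec
    -- each good index contributes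
    have hgoodbd : ∀ i ∈ good, (16:ℝ≥0∞)⁻¹ * μ (F n) ≤ μ (F n ∩ ((ψ i)⁻¹ • Q)) := by
      intro i hi
      obtain ⟨hiV, hiK⟩ := hψmem i hi
      have e1 : μ (F n ∩ ((ψ i)⁻¹ • Q)) = μ ((ψ i • F n) ∩ Q) := by
        rw [← measure_smul μ (ψ i) (F n ∩ ((ψ i)⁻¹ • Q)), Set.smul_set_inter, smul_inv_smul]
      have e2 : μ (F n ∩ Q) ≤ μ ((ψ i • F n) ∩ Q) + μ (F n \ ψ i • F n) := by
        refine (measure_mono ?_).trans (measure_union_le _ _)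
        rintro x ⟨hx1, hx2⟩
        by_cases hx3 : x ∈ ψ i • F n
        · exact Or.inl ⟨hx3, hx2⟩
        · exact Or.inr ⟨hx1, hx3⟩
      have e3 : μ (F n \ ψ i • F n) < (16:ℝ≥0∞)⁻¹ * μ (F n) := by
        have hi2 := hinv'' (ψ i) hiK
        rw [h16] at hi2
        exact lt_of_le_of_lt
          (measure_mono (by rw [Set.symmDiff_def]; exact Set.subset_union_left)) hi2
      by_contra hcon
      push_neg at hcon
      rw [e1] at hcon
      have hlt2 : μ (F n ∩ Q) < (16:ℝ≥0∞)⁻¹ * μ (F n) + (16:ℝ≥0∞)⁻¹ * μ (F n) :=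
        lt_of_le_of_lt e2 (ENNReal.add_lt_add hcon e3)
      rw [← add_mul, h8] at hlt2
      exact lt_irrefl _ (hQbig.trans hlt2)
    -- sum up
    have hsum : ∑ i ∈ good, μ (F n ∩ ((ψ i)⁻¹ • Q)) ≤ μ (F n) := by
      refine aux_sum_inter_le μ (F n) good (fun i => (ψ i)⁻¹ • Q)
        (fun i _ => ((isClosed_closure.smul _).measurableSet)) ?_
      intro i hi j hj hij
      simp only [hgooddef, Finset.mem_filter, Finset.mem_range] at hi hj
      exact claim2 i j hi.1 hj.1 hij (ψ i) (ψ j)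
        (hψmem i (by simp [hgooddef, Finset.mem_filter, hi.1, hi.2])).1
        (hψmem j (by simp [hgooddef, Finset.mem_filter, hj.1, hj.2])).1
    have hlow : (good.card : ℝ≥0∞) * ((16:ℝ≥0∞)⁻¹ * μ (F n))
        ≤ ∑ i ∈ good, μ (F n ∩ ((ψ i)⁻¹ • Q)) := by
      have := Finset.card_nsmul_le_sum good (fun i => μ (F n ∩ ((ψ i)⁻¹ • Q)))
        ((16:ℝ≥0∞)⁻¹ * μ (F n)) hgoodbd
      rwa [nsmul_eq_mul] at this
    have h31 : (31:ℝ≥0∞) * ((16:ℝ≥0∞)⁻¹ * μ (F n)) ≤ μ (F n) := by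
      refine le_trans (mul_le_mul_left ?_ _) (hlow.trans hsum)
      exact_mod_cast hgoodcard
    have hx0 : (16:ℝ≥0∞)⁻¹ * μ (F n) ≠ 0 :=
      mul_ne_zero (by norm_num) (hFpos n).ne'
    have hx1 : (16:ℝ≥0∞)⁻¹ * μ (F n) ≠ ⊤ :=
      ENNReal.mul_ne_top (by norm_num) (hFfin n).ne
    have h16x : μ (F n) = 16 * ((16:ℝ≥0∞)⁻¹ * μ (F n)) := by
      rw [← mul_assoc, ENNReal.mul_inv_cancel (by norm_num) (by norm_num), one_mul]
    have h31' : (31:ℝ≥0∞) * ((16:ℝ≥0∞)⁻¹ * μ (F n))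
        ≤ 16 * ((16:ℝ≥0∞)⁻¹ * μ (F n)) := by
      rw [← h16x]
      exact h31
    have hfinal : (31:ℝ≥0∞) ≤ 16 := by
      rwa [ENNReal.mul_le_mul_iff_left hx0 hx1] at h31'
    norm_num at hfinal
  obtain ⟨n, hnN, hnQ⟩ := stepB
  -- inner products with averages
  have hIP : ∀ j : ℕ, ⟪((μ (F j)).toReal⁻¹ • ∫ h in F j, (π h⁻¹ f : Lp ℝ 2 μ) ∂μ : Lp ℝ 2 μ), f⟫
      = (μ (F j)).toReal⁻¹ * ∫ h in F j, ⟪(π h⁻¹ f : Lp ℝ 2 μ), f⟫ ∂μ := by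
    intro j
    rw [real_inner_smul_left]
    congr 1
    rw [real_inner_comm, ← integral_inner (hint f j) f]
    exact integral_congr_ae (Filter.Eventually.of_forall fun h => real_inner_comm _ _)
  -- upper bound for the n-average
  have hBn : (μ (F n)).toReal⁻¹ * (∫ h in F n, ⟪(π h⁻¹ f : Lp ℝ 2 μ), f⟫ ∂μ) ≤ 1/8 := by
    haveI := hfinres (F n) (hFfin n)
    have htR : (0:ℝ) < (μ (F n)).toReal := ENNReal.toReal_pos (hFpos n).ne' (hFfin n).ne
    have hptw : ∀ h : G, ⟪(π h⁻¹ f : Lp ℝ 2 μ), f⟫ ≤ Q.indicator (fun _ => (1:ℝ)) h := by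
      intro h
      rw [hinner h]
      by_cases hh : h ∈ Q
      · rw [Set.indicator_of_mem hh]
        have h1 : μ ((h • S) ∩ S) ≤ μ S := measure_mono Set.inter_subset_right
        have h2 : (μ ((h • S) ∩ S)).toReal ≤ a := ENNReal.toReal_mono hSfin h1
        calc c^2 * (μ ((h • S) ∩ S)).toReal ≤ c^2 * a :=
              mul_le_mul_of_nonneg_left h2 (sq_nonneg c)
          _ = 1 := hc2
      · rw [Set.indicator_of_notMem hh]
        have hempty : (h • S) ∩ S = ∅ := by
          rw [Set.eq_empty_iff_forall_notMem]
          rintro x ⟨⟨s1, hs1, rfl⟩, hx2⟩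
          refine hh (hSSQ ⟨h • s1, hx2, s1⁻¹, Set.inv_mem_inv.2 hs1, ?_⟩)
          simp only [smul_eq_mul]
          group
        rw [hempty]
        simp
    have hii : Integrable (fun h : G => ⟪(π h⁻¹ f : Lp ℝ 2 μ), f⟫) (μ.restrict (F n)) := by
      refine Integrable.mono' (integrable_const 1) ?_ ?_
      · exact Continuous.aestronglyMeasurable (Continuous.inner (hcontf f) continuous_const)
      · refine Filter.Eventually.of_forall fun h => ?_
        have h1 := abs_real_inner_le_norm (π h⁻¹ f : Lp ℝ 2 μ) f
        rw [(π h⁻¹).norm_map, hnf] at h1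
        simpa using h1
    have hiq : Integrable (fun h : G => Q.indicator (fun _ => (1:ℝ)) h) (μ.restrict (F n)) :=
      (integrable_const (1:ℝ)).indicator hQmeas
    have hmono : ∫ h in F n, ⟪(π h⁻¹ f : Lp ℝ 2 μ), f⟫ ∂μ
        ≤ ∫ h in F n, Q.indicator (fun _ => (1:ℝ)) h ∂μ :=
      integral_mono hii hiq hptw
    have hqval : ∫ h in F n, Q.indicator (fun _ => (1:ℝ)) h ∂μ ≤ (1/8) * (μ (F n)).toReal := by
      rw [integral_indicator_const (1:ℝ) hQmeas, smul_eq_mul, mul_one,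
        measureReal_restrict_apply hQmeas, measureReal_def]
      have h1 : μ (Q ∩ F n) ≤ (8:ℝ≥0∞)⁻¹ * μ (F n) := by rw [Set.inter_comm]; exact hnQ
      have h2 := ENNReal.toReal_mono (ENNReal.mul_ne_top (by norm_num) (hFfin n).ne) h1
      rw [ENNReal.toReal_mul, ENNReal.toReal_inv] at h2
      norm_num at h2 ⊢
      linarith
    calc (μ (F n)).toReal⁻¹ * ∫ h in F n, ⟪(π h⁻¹ f : Lp ℝ 2 μ), f⟫ ∂μ
        ≤ (μ (F n)).toReal⁻¹ * ((1/8) * (μ (F n)).toReal) :=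
          mul_le_mul_of_nonneg_left (hmono.trans hqval) (inv_nonneg.2 htR.le)
      _ = 1/8 := by field_simp
  -- lower bound for the N-average
  have hAN' : (3:ℝ)/4 ≤ (μ (F N)).toReal⁻¹ * ∫ h in F N, ⟪(π h⁻¹ f : Lp ℝ 2 μ), f⟫ ∂μ := by
    rw [← hIP N]
    have h2 : |⟪((μ (F N)).toReal⁻¹ • ∫ h in F N, (π h⁻¹ f : Lp ℝ 2 μ) ∂μ : Lp ℝ 2 μ) - f, f⟫|
        ≤ 1/4 := by
      calc |⟪((μ (F N)).toReal⁻¹ • ∫ h in F N, (π h⁻¹ f : Lp ℝ 2 μ) ∂μ : Lp ℝ 2 μ) - f, f⟫|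
          ≤ ‖((μ (F N)).toReal⁻¹ • ∫ h in F N, (π h⁻¹ f : Lp ℝ 2 μ) ∂μ : Lp ℝ 2 μ) - f‖ * ‖f‖ :=
            abs_real_inner_le_norm _ _
        _ ≤ 1/4 := by rw [hnf, mul_one]; exact hAN
    have h3 : ⟪((μ (F N)).toReal⁻¹ • ∫ h in F N, (π h⁻¹ f : Lp ℝ 2 μ) ∂μ : Lp ℝ 2 μ), f⟫
        = ⟪((μ (F N)).toReal⁻¹ • ∫ h in F N, (π h⁻¹ f : Lp ℝ 2 μ) ∂μ : Lp ℝ 2 μ) - f, f⟫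
          + ⟪f, f⟫ := by
      rw [inner_sub_left]
      ring
    have h4 : ⟪f, f⟫ = 1 := by
      rw [real_inner_self_eq_norm_mul_norm, hnf]
      norm_num
    rw [h3, h4]
    have := abs_le.1 h2
    linarith [this.1]
  -- contradiction
  have hlt := hr (1/2) (by norm_num) f hnf.le N n le_rfl hnN
  have hge : (1:ℝ)/2 ≤ ‖(μ (F N)).toReal⁻¹ • ∫ h in F N, (π h⁻¹ f : Lp ℝ 2 μ) ∂μ -
      (μ (F n)).toReal⁻¹ • ∫ h in F n, (π h⁻¹ f : Lp ℝ 2 μ) ∂μ‖ := by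
    set vN : Lp ℝ 2 μ := (μ (F N)).toReal⁻¹ • ∫ h in F N, (π h⁻¹ f : Lp ℝ 2 μ) ∂μ with hvN
    set vn : Lp ℝ 2 μ := (μ (F n)).toReal⁻¹ • ∫ h in F n, (π h⁻¹ f : Lp ℝ 2 μ) ∂μ with hvn
    have h1 : ⟪vN - vn, f⟫ ≤ ‖vN - vn‖ := by
      calc ⟪vN - vn, f⟫ ≤ ‖vN - vn‖ * ‖f‖ := real_inner_le_norm _ _
        _ = ‖vN - vn‖ := by rw [hnf, mul_one]
    have h2 : ⟪vN - vn, f⟫ = ⟪vN, f⟫ - ⟪vn, f⟫ := inner_sub_left _ _ _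
    have h3 : ⟪vN, f⟫ ≥ 3/4 := by rw [hvN, hIP N]; exact hAN'
    have h4 : ⟪vn, f⟫ ≤ 1/8 := by rw [hvn, hIP n]; exact hBn
    linarith
  linarith
end

section
/- Let B be a normed vector space, G a group, and π : G → L(B, B) a group homomorphism into the bounded linear operators on B with ‖π(g)‖ ≤ 1 for all g ∈ G. Let F_N and F_K be nonempty finite subsets of G and η > 0, and assume that for every h ∈ F_N one has |F_K Δ hF_K| < η·|F_K|. Define A_N x := (1/|F_N|) Σ_{g ∈ F_N} π(g⁻¹) x and A_K x := (1/|F_K|) Σ_{g ∈ F_K} π(g⁻¹) x. Then for every x ∈ B, ‖A_K x − A_K (A_N x)‖ ≤ η ‖x‖. -/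
/-!
Since `π(g⁻¹) π(h⁻¹) = π((hg)⁻¹)`, the operator `A_K A_N` is the average over `h ∈ F_N`
of `A_{hF_K}`. Each `A_{hF_K} x` differs from `A_K x` by `|F_K|⁻¹` times a signed sum over
`F_K Δ hF_K` of vectors of norm at most `‖x‖`, so it lies within `η‖x‖` of `A_K x`; by
convexity of balls, so does the average.
-/

open Pointwise Finset

theorem Finset.sum_smul_finset {α β M : Type*} [Group α] [MulAction α β] [DecidableEq β]
    [AddCommMonoid M] (s : Finset β) (a : α) (f : β → M) :
    ∑ b ∈ a • s, f b = ∑ b ∈ s, f (a • b) := by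
  rw [smul_finset_def, sum_image (MulAction.injective a).injOn]

theorem norm_sum_sub_sum_le_card_symmDiff_mul {ι E : Type*} [DecidableEq ι]
    [SeminormedAddCommGroup E] {f : ι → E} {C : ℝ} (s t : Finset ι)
    (hf : ∀ i ∈ symmDiff s t, ‖f i‖ ≤ C) :
    ‖∑ i ∈ s, f i - ∑ i ∈ t, f i‖ ≤ #(symmDiff s t) * C := by
  calc ‖∑ i ∈ s, f i - ∑ i ∈ t, f i‖
        = ‖∑ i ∈ s \ t, f i - ∑ i ∈ t \ s, f i‖ := by rw [sum_sdiff_sub_sum_sdiff]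
    _ ≤ ∑ i ∈ s \ t, ‖f i‖ + ∑ i ∈ t \ s, ‖f i‖ :=
        (norm_sub_le _ _).trans (add_le_add (norm_sum_le _ _) (norm_sum_le _ _))
    _ = ∑ i ∈ symmDiff s t, ‖f i‖ := by
        rw [symmDiff_def, sup_eq_union, sum_union disjoint_sdiff_sdiff]
    _ ≤ #(symmDiff s t) * C := by
        simpa using sum_le_card_nsmul _ _ _ hf

theorem dist_inv_card_smul_sum_le {ι E : Type*} [SeminormedAddCommGroup E] [NormedSpace ℝ E]
    {s : Finset ι} (hs : s.Nonempty) {v : ι → E} {c : E} {C : ℝ}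
    (hv : ∀ i ∈ s, dist (v i) c ≤ C) :
    dist ((#s : ℝ)⁻¹ • ∑ i ∈ s, v i) c ≤ C := by
  have hmem := (convex_closedBall c C).sum_mem (w := fun _ ↦ (#s : ℝ)⁻¹)
    (fun _ _ ↦ by positivity) (by simp [hs.card_ne_zero]) hv
  simpa [smul_sum] using hmem

section ErgodicAverage

variable {B G : Type*} [NormedAddCommGroup B] [NormedSpace ℝ B] [Group G]
  (π : G →* (B →L[ℝ] B))

noncomputable def ergodicAverage (F : Finset G) : B →L[ℝ] B :=
  (#F : ℝ)⁻¹ • ∑ g ∈ F, π g⁻¹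

theorem ergodicAverage_apply (F : Finset G) (x : B) :
    ergodicAverage π F x = (#F : ℝ)⁻¹ • ∑ g ∈ F, π g⁻¹ x := by
  simp [ergodicAverage]

variable [DecidableEq G]

theorem ergodicAverage_comp_map_inv (F : Finset G) (h : G) :
    ergodicAverage π F ∘L π h⁻¹ = ergodicAverage π (h • F) := by
  ext x
  simp [ergodicAverage_apply, card_smul_finset, sum_smul_finset]

theorem ergodicAverage_comp_ergodicAverage (FK FN : Finset G) :
    ergodicAverage π FK ∘L ergodicAverage π FN =
      (#FN : ℝ)⁻¹ • ∑ h ∈ FN, ergodicAverage π (h • FK) := by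
  rw [ergodicAverage.eq_1 π FN, ContinuousLinearMap.comp_smul,
    ContinuousLinearMap.comp_finsetSum]
  simp only [ergodicAverage_comp_map_inv]

theorem norm_ergodicAverage_sub_le (hπ : ∀ g, ‖π g‖ ≤ 1) {F F' : Finset G} (hcard : #F' = #F)
    (x : B) :
    ‖ergodicAverage π F x - ergodicAverage π F' x‖ ≤ #(symmDiff F F') / #F * ‖x‖ := by
  have hbound : ∀ g, ‖π g⁻¹ x‖ ≤ ‖x‖ := fun g ↦ by
    simpa using (π g⁻¹).le_of_opNorm_le (hπ g⁻¹) x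
  rw [ergodicAverage_apply, ergodicAverage_apply, hcard, ← smul_sub, norm_smul, norm_inv,
    RCLike.norm_natCast, div_mul_eq_mul_div, inv_mul_eq_div]
  gcongr
  exact norm_sum_sub_sum_le_card_symmDiff_mul F F' fun g _ ↦ hbound g

end ErgodicAverage

theorem stmt_14_general {B : Type*} [NormedAddCommGroup B] [NormedSpace ℝ B]
    {G : Type*} [Group G] [DecidableEq G]
    (π : G →* (B →L[ℝ] B)) (hπ : ∀ g : G, ‖π g‖ ≤ 1)
    (FN FK : Finset G) (hFN : FN.Nonempty)
    (η : ℝ) (hη : 0 < η)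
    (hfolner : ∀ h ∈ FN, ((symmDiff FK (h • FK)).card : ℝ) < η * FK.card)
    (x : B) :
    ‖((FK.card : ℝ)⁻¹ • ∑ g ∈ FK, π g⁻¹ x) -
      ((FK.card : ℝ)⁻¹ • ∑ g ∈ FK, π g⁻¹ ((FN.card : ℝ)⁻¹ • ∑ h ∈ FN, π h⁻¹ x))‖
      ≤ η * ‖x‖ := by
  have htranslate : ∀ h ∈ FN,
      dist (ergodicAverage π (h • FK) x) (ergodicAverage π FK x) ≤ η * ‖x‖ := by
    intro h hh
    rw [dist_comm, dist_eq_norm]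
    refine (norm_ergodicAverage_sub_le π hπ (card_smul_finset h FK) x).trans ?_
    gcongr
    exact div_le_of_le_mul₀ (Nat.cast_nonneg _) hη.le (hfolner h hh).le
  rw [← ergodicAverage_apply π FN, ← ergodicAverage_apply π FK, ← ergodicAverage_apply π FK,
    ← ContinuousLinearMap.comp_apply, ergodicAverage_comp_ergodicAverage, ← dist_eq_norm,
    dist_comm, smul_apply, _root_.sum_apply]
  exact dist_inv_card_smul_sum_le hFN htranslate

/-- Discrete averaging lemma: if every `h ∈ F_N` moves `F_K` by less than `η·|F_K|`, then
`‖A_K x − A_K A_N x‖ ≤ η‖x‖`. -/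
theorem stmt_14 {B : Type*} [NormedAddCommGroup B] [NormedSpace ℝ B]
    {G : Type*} [Group G] [DecidableEq G]
    (π : G →* (B →L[ℝ] B)) (hπ : ∀ g : G, ‖π g‖ ≤ 1)
    (FN FK : Finset G) (hFN : FN.Nonempty) (hFK : FK.Nonempty)
    (η : ℝ) (hη : 0 < η)
    (hfolner : ∀ h ∈ FN, ((symmDiff FK (h • FK)).card : ℝ) < η * FK.card)
    (x : B) :
    ‖((FK.card : ℝ)⁻¹ • ∑ g ∈ FK, π g⁻¹ x) -
      ((FK.card : ℝ)⁻¹ • ∑ g ∈ FK, π g⁻¹ ((FN.card : ℝ)⁻¹ • ∑ h ∈ FN, π h⁻¹ x))‖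
      ≤ η * ‖x‖ :=
  stmt_14_general π hπ FN FK hFN η hη hfolner x
end

section
/- Let G be a locally compact second countable topological group with left Haar measure m, let B be a Banach space, and let π : G → L(B,B) be a group homomorphism into bounded linear operators with ‖π(g)‖ ≤ 1 for all g, such that for every x ∈ B the map g ↦ π(g)x is strongly measurable. Let F_N and F_K be compact subsets of G of positive finite Haar measure and let 0 < η. Assume there exists a measurable F_N' ⊆ F_N with m(F_N ∖ F_N') < η·m(F_N) such that m(F_K Δ hF_K) < η·m(F_K) for every h ∈ F_N'. Define A_N x := (1/m(F_N)) ∫_{F_N} π(g⁻¹)x dm(g) and A_K x := (1/m(F_K)) ∫_{F_K} π(g⁻¹)x dm(g) (Bochner integrals). Then for every x ∈ B, ‖A_K x − A_K (A_N x)‖ ≤ 3η ‖x‖. -/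
/-!
Write `f g = π g⁻¹ x`. Since `π g⁻¹ (π h⁻¹ x) = π (h g)⁻¹ x`, Fubini and left invariance give
`A_K x - A_K (A_N x) = ⨍_{h ∈ F_N} (⨍_{F_K} f - ⨍_{h F_K} f)`. For `h ∈ F_N'` the integrand is at
most `‖x‖ m(F_K Δ h F_K) / m(F_K) ≤ η ‖x‖`; elsewhere it is at most `2 ‖x‖`, but `F_N \ F_N'` has
relative measure at most `η`. This gives `η ‖x‖ + 2 η ‖x‖`.

`G` need not be Hausdorff, so compact sets need not be Borel. They are replaced by their closures,
which no Borel set can tell apart from them.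
-/

open MeasureTheory Filter Pointwise
open scoped symmDiff

section Closure

variable {X : Type*} [TopologicalSpace X] [R1Space X] [MeasurableSpace X] [BorelSpace X]

theorem IsCompact.restrict_closure {K : Set X} (hK : IsCompact K) (μ : Measure X) :
    μ.restrict (closure K) = μ.restrict K := by
  ext s hs
  rw [Measure.restrict_apply hs, Measure.restrict_apply hs]
  refine le_antisymm ?_ (measure_mono (Set.inter_subset_inter_right s subset_closure))
  have hcl : closure K ⊆ sᶜ ∪ toMeasurable μ (s ∩ K) :=
    hK.closure_subset_measurableSet (hs.compl.union (measurableSet_toMeasurable _ _))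
      fun x hx => (em (x ∈ s)).symm.imp id fun hxs => subset_toMeasurable μ _ ⟨hxs, hx⟩
  calc μ (s ∩ closure K) ≤ μ (toMeasurable μ (s ∩ K)) :=
        measure_mono fun y ⟨hys, hyK⟩ => (hcl hyK).resolve_left (not_not.2 hys)
    _ = μ (s ∩ K) := measure_toMeasurable _

theorem IsCompact.measure_closure_symmDiff_closure_le {s t : Set X} (hs : IsCompact s)
    (ht : IsCompact t) (μ : Measure X) : μ (closure s ∆ closure t) ≤ μ (s ∆ t) := by
  set T := toMeasurable μ (s ∆ t)
  have hT : MeasurableSet T := measurableSet_toMeasurable μ _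
  have closure_sdiff :
      ∀ {a b : Set X}, IsCompact a → a \ b ⊆ T → closure a \ closure b ⊆ T := by
    intro a b ha hab y ⟨hya, hyb⟩
    have : closure a ⊆ T ∪ closure b :=
      ha.closure_subset_measurableSet (hT.union measurableSet_closure) fun x hx =>
        (em (x ∈ b)).symm.imp (fun hxb => hab ⟨hx, hxb⟩) fun hxb => subset_closure hxb
    exact (this hya).resolve_right hyb
  have hst : s \ t ⊆ T := fun y hy => subset_toMeasurable μ _ (Set.mem_symmDiff.2 (Or.inl hy))
  have hts : t \ s ⊆ T := fun y hy => subset_toMeasurable μ _ (Set.mem_symmDiff.2 (Or.inr hy))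
  calc μ (closure s ∆ closure t) ≤ μ T :=
        measure_mono (Set.union_subset (closure_sdiff hs hst) (closure_sdiff ht hts))
    _ = μ (s ∆ t) := measure_toMeasurable _

end Closure

namespace MeasureTheory

variable {X E : Type*} [MeasurableSpace X] {μ : Measure X}
  [NormedAddCommGroup E] [NormedSpace ℝ E]

theorem average_sub {f g : X → E} (hf : Integrable f μ) (hg : Integrable g μ) :
    ⨍ x, f x - g x ∂μ = ⨍ x, f x ∂μ - ⨍ x, g x ∂μ := by
  simp only [average_eq, integral_sub hf hg, smul_sub]

theorem average_average_swap {Y : Type*} [MeasurableSpace Y] {ν : Measure Y} [SFinite μ]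
    [SFinite ν] {F : X → Y → E} (hF : Integrable (Function.uncurry F) (μ.prod ν)) :
    ⨍ x, ⨍ y, F x y ∂ν ∂μ = ⨍ y, ⨍ x, F x y ∂μ ∂ν := by
  simp only [average_eq, integral_smul, smul_smul, mul_comm, integral_integral_swap hF]

theorem norm_setIntegral_sub_setIntegral_le {f : X → E} {s t : Set X} {C : ℝ}
    (hs : MeasurableSet s) (ht : MeasurableSet t) (hfs : IntegrableOn f s μ)
    (hft : IntegrableOn f t μ) (hst : μ (s ∆ t) ≠ ⊤) (hC : ∀ x ∈ s ∆ t, ‖f x‖ ≤ C) :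
    ‖∫ x in s, f x ∂μ - ∫ x in t, f x ∂μ‖ ≤ C * μ.real (s ∆ t) := by
  have hsplit : ∫ x in s, f x ∂μ - ∫ x in t, f x ∂μ
      = ∫ x in s \ t, f x ∂μ - ∫ x in t \ s, f x ∂μ := by
    rw [← integral_inter_add_sdiff ht hfs, ← integral_inter_add_sdiff hs hft, Set.inter_comm]
    abel
  have hsub : s \ t ⊆ s ∆ t := fun y hy => Set.mem_symmDiff.2 (Or.inl hy)
  have hsub' : t \ s ⊆ s ∆ t := fun y hy => Set.mem_symmDiff.2 (Or.inr hy)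
  have hfin : μ (s \ t) < ⊤ := (measure_mono hsub).trans_lt hst.lt_top
  have hfin' : μ (t \ s) < ⊤ := (measure_mono hsub').trans_lt hst.lt_top
  calc ‖∫ x in s, f x ∂μ - ∫ x in t, f x ∂μ‖
      ≤ ‖∫ x in s \ t, f x ∂μ‖ + ‖∫ x in t \ s, f x ∂μ‖ := hsplit ▸ norm_sub_le _ _
    _ ≤ C * μ.real (s \ t) + C * μ.real (t \ s) :=
        add_le_add (norm_setIntegral_le_of_norm_le_const hfin fun x hx => hC x (hsub hx))
          (norm_setIntegral_le_of_norm_le_const hfin' fun x hx => hC x (hsub' hx))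
    _ = C * μ.real (s ∆ t) := by
        rw [← mul_add, measureReal_def, measureReal_def, measureReal_def,
          measure_symmDiff_eq hs.nullMeasurableSet ht.nullMeasurableSet,
          ENNReal.toReal_add hfin.ne hfin'.ne]

theorem norm_setAverage_sub_setAverage_le {f : X → E} {s t : Set X} {C : ℝ}
    (hs : MeasurableSet s) (ht : MeasurableSet t) (hμ : μ s = μ t) (hfs : IntegrableOn f s μ)
    (hft : IntegrableOn f t μ) (hst : μ (s ∆ t) ≠ ⊤) (hC : ∀ x ∈ s ∆ t, ‖f x‖ ≤ C) :
    ‖⨍ x in s, f x ∂μ - ⨍ x in t, f x ∂μ‖ ≤ C * μ.real (s ∆ t) / μ.real s := by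
  rw [setAverage_eq, setAverage_eq, measureReal_def μ t, ← hμ, ← measureReal_def, ← smul_sub,
    norm_smul, norm_inv, Real.norm_of_nonneg measureReal_nonneg, inv_mul_eq_div]
  exact div_le_div_of_nonneg_right
    (norm_setIntegral_sub_setIntegral_le hs ht hfs hft hst hC) measureReal_nonneg

theorem norm_setAverage_le_of_norm_le_of_measure_sdiff_le {f : X → E} {s t : Set X} {a b ε : ℝ}
    (ht : MeasurableSet t) (hts : t ⊆ s) (hs₀ : μ s ≠ 0) (hs : μ s ≠ ⊤)
    (hf : IntegrableOn f s μ) (ha₀ : 0 ≤ a) (hb₀ : 0 ≤ b) (ha : ∀ x ∈ t, ‖f x‖ ≤ a)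
    (hb : ∀ x ∈ s, ‖f x‖ ≤ b) (hε : μ.real (s \ t) ≤ ε * μ.real s) :
    ‖⨍ x in s, f x ∂μ‖ ≤ a + ε * b := by
  have hpos : 0 < μ.real s := ENNReal.toReal_pos hs₀ hs
  rw [setAverage_eq, norm_smul, norm_inv, Real.norm_of_nonneg hpos.le, inv_mul_le_iff₀ hpos,
    ← integral_inter_add_sdiff ht hf, Set.inter_eq_right.2 hts]
  calc ‖∫ x in t, f x ∂μ + ∫ x in s \ t, f x ∂μ‖
      ≤ ‖∫ x in t, f x ∂μ‖ + ‖∫ x in s \ t, f x ∂μ‖ := norm_add_le _ _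
    _ ≤ a * μ.real t + b * μ.real (s \ t) :=
        add_le_add (norm_setIntegral_le_of_norm_le_const ((measure_mono hts).trans_lt hs.lt_top) ha)
          (norm_setIntegral_le_of_norm_le_const
            ((measure_mono Set.sdiff_subset).trans_lt hs.lt_top) fun x hx => hb x hx.1)
    _ ≤ a * μ.real s + b * (ε * μ.real s) := by gcongr
    _ = μ.real s * (a + ε * b) := by ring

theorem norm_setAverage_le {f : X → E} {s : Set X} {C : ℝ} (hs : μ s ≠ ⊤) (hC₀ : 0 ≤ C)
    (hC : ∀ x ∈ s, ‖f x‖ ≤ C) : ‖⨍ x in s, f x ∂μ‖ ≤ C := by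
  rw [setAverage_eq, norm_smul, norm_inv, Real.norm_of_nonneg measureReal_nonneg]
  calc (μ.real s)⁻¹ * ‖∫ x in s, f x ∂μ‖ ≤ (μ.real s)⁻¹ * (C * μ.real s) := by
        gcongr
        exact norm_setIntegral_le_of_norm_le_const hs.lt_top hC
    _ = C * ((μ.real s)⁻¹ * μ.real s) := by ring
    _ ≤ C := mul_le_of_le_one_right hC₀ (inv_mul_le_one_of_le₀ le_rfl measureReal_nonneg)

theorem _root_.ContinuousLinearMap.average_comp_comm {F : Type*} [NormedAddCommGroup F]
    [NormedSpace ℝ F] [CompleteSpace E] [CompleteSpace F] (L : E →L[ℝ] F) {φ : X → E}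
    (hφ : Integrable φ μ) :
    ⨍ x, L (φ x) ∂μ = L (⨍ x, φ x ∂μ) := by
  rw [average_eq, average_eq, L.integral_comp_comm hφ, L.map_smul]

end MeasureTheory

section Group

variable {G E : Type*} [Group G] [MeasurableSpace G] [NormedAddCommGroup E] [NormedSpace ℝ E]

theorem setIntegral_smul_set [MeasurableMul G] (μ : Measure G) [μ.IsMulLeftInvariant]
    (f : G → E) (h : G) (s : Set G) : ∫ x in h • s, f x ∂μ = ∫ x in s, f (h * x) ∂μ :=
  (measurePreserving_mul_left μ h).setIntegral_image_emb
    (MeasurableEquiv.mulLeft h).measurableEmbedding f s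

theorem setAverage_smul_set [MeasurableMul G] (μ : Measure G) [μ.IsMulLeftInvariant]
    (f : G → E) (h : G) (s : Set G) : ⨍ x in h • s, f x ∂μ = ⨍ x in s, f (h * x) ∂μ := by
  rw [setAverage_eq, setAverage_eq, measureReal_def, measure_smul, ← measureReal_def,
    setIntegral_smul_set]

end Group

section Representation

variable {G B : Type*} [Group G] [MeasurableSpace G] [MeasurableMul₂ G] [MeasurableInv G]
  [NormedAddCommGroup B] [NormedSpace ℝ B] [CompleteSpace B]

theorem norm_setAverage_sub_setAverage_setAverage_le (μ : Measure G) [μ.IsMulLeftInvariant]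
    (π : G →* (B →L[ℝ] B)) (hπ : ∀ g, ‖π g‖ ≤ 1)
    (hmeas : ∀ x : B, StronglyMeasurable fun g => π g x) {N N' K : Set G}
    (hN' : MeasurableSet N') (hK : MeasurableSet K) (hN'N : N' ⊆ N)
    (hN₀ : μ N ≠ 0) (hNfin : μ N ≠ ⊤) (hKfin : μ K ≠ ⊤) {η : ℝ} (hη : 0 ≤ η)
    (hsmall : μ (N \ N') ≤ ENNReal.ofReal η * μ N)
    (hfolner : ∀ h ∈ N', μ (K ∆ (h • K)) ≤ ENNReal.ofReal η * μ K) (x : B) :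
    ‖(⨍ g in K, π g⁻¹ x ∂μ) - ⨍ g in K, π g⁻¹ (⨍ h in N, π h⁻¹ x ∂μ) ∂μ‖ ≤ 3 * η * ‖x‖ := by
  set f : G → B := fun g => π g⁻¹ x
  have hfb : ∀ g, ‖f g‖ ≤ ‖x‖ := fun g =>
    ((π g⁻¹).le_of_opNorm_le (hπ _) x).trans_eq (one_mul _)
  have hfm : StronglyMeasurable f := (hmeas x).comp_measurable measurable_inv
  have hint : ∀ {s}, μ s ≠ ⊤ → IntegrableOn f s μ := fun hs =>
    IntegrableOn.of_bound hs.lt_top hfm.aestronglyMeasurable _ (ae_of_all _ hfb)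
  have hreal : ∀ {s t}, μ s ≤ ENNReal.ofReal η * μ t → μ t ≠ ⊤ → μ.real s ≤ η * μ.real t :=
    fun hst ht => (ENNReal.toReal_mono (by finiteness) hst).trans_eq
      (by rw [ENNReal.toReal_mul, ENNReal.toReal_ofReal hη, measureReal_def])
  have := isFiniteMeasure_restrict.2 hKfin
  have := isFiniteMeasure_restrict.2 hNfin
  set F : G → B := fun h => ⨍ g in K, f (h * g) ∂μ
  have hF : ∀ h, ‖F h‖ ≤ ‖x‖ := fun h => norm_setAverage_le hKfin (norm_nonneg x) fun g _ => hfb _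
  have hFint : IntegrableOn F N μ := by
    refine IntegrableOn.of_bound hNfin.lt_top ?_ ‖x‖ (ae_of_all _ hF)
    simp only [F, average_eq]
    exact ((hfm.comp_measurable measurable_mul).integral_prod_right'.const_smul
      _).aestronglyMeasurable
  have hident : ⨍ g in K, π g⁻¹ (⨍ h in N, f h ∂μ) ∂μ = ⨍ h in N, F h ∂μ := by
    have hcomm : ∀ g, π g⁻¹ (⨍ h in N, f h ∂μ) = ⨍ h in N, f (h * g) ∂μ := fun g => by
      rw [← (π g⁻¹).average_comp_comm (hint hNfin)]
      simp only [f, mul_inv_rev, map_mul]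
      rfl
    simp only [hcomm]
    exact average_average_swap (Integrable.of_bound
      (hfm.comp_measurable (measurable_snd.mul measurable_fst)).aestronglyMeasurable ‖x‖
      (ae_of_all _ fun _ => hfb _))
  have hD_N' : ∀ h ∈ N', ‖(⨍ g in K, f g ∂μ) - F h‖ ≤ η * ‖x‖ := fun h hh => by
    have hμ : μ K = μ (h • K) := (measure_smul μ h K).symm
    have hfolner_real : μ.real (K ∆ (h • K)) ≤ η * μ.real K := hreal (hfolner h hh) hKfin
    simp only [F, ← setAverage_smul_set]
    refine (norm_setAverage_sub_setAverage_le hK (hK.const_smul h) hμ (hint hKfin)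
      (hint (hμ ▸ hKfin)) (measure_symmDiff_ne_top hKfin (hμ ▸ hKfin)) fun g _ => hfb g).trans ?_
    refine div_le_of_le_mul₀ measureReal_nonneg (by positivity) ?_
    calc ‖x‖ * μ.real (K ∆ (h • K)) ≤ ‖x‖ * (η * μ.real K) := by gcongr
      _ = η * ‖x‖ * μ.real K := by ring
  have hD_le : ∀ h, ‖(⨍ g in K, f g ∂μ) - F h‖ ≤ 2 * ‖x‖ := fun h =>
    (norm_sub_le _ _).trans (by
      linarith [norm_setAverage_le hKfin (norm_nonneg x) fun g _ => hfb g, hF h])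
  rw [hident, ← setAverage_const hN₀ hNfin (⨍ g in K, f g ∂μ),
    ← average_sub (integrable_const _) hFint]
  calc _ ≤ η * ‖x‖ + η * (2 * ‖x‖) :=
        norm_setAverage_le_of_norm_le_of_measure_sdiff_le hN' hN'N hN₀ hNfin
          ((integrable_const _).sub hFint)
          (by positivity) (by positivity) hD_N' (fun h _ => hD_le h) (hreal hsmall hNfin)
    _ = 3 * η * ‖x‖ := by ring

end Representation

theorem stmt_15_general {G : Type*} [Group G] [TopologicalSpace G] [IsTopologicalGroup G]
    [SecondCountableTopology G]
    [MeasurableSpace G] [BorelSpace G]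
    (μ : Measure G) [μ.IsHaarMeasure]
    {B : Type*} [NormedAddCommGroup B] [NormedSpace ℝ B] [CompleteSpace B]
    (π : G →* (B →L[ℝ] B)) (hπ : ∀ g : G, ‖π g‖ ≤ 1)
    (hmeas : ∀ x : B, StronglyMeasurable fun g => π g x)
    (FN FK : Set G) (hFNc : IsCompact FN) (hFKc : IsCompact FK)
    (hFNpos : 0 < μ FN) (hFNfin : μ FN < ⊤) (hFKfin : μ FK < ⊤)
    (η : ℝ) (hη : 0 < η)
    (FN' : Set G) (hFN'sub : FN' ⊆ FN) (hFN'meas : MeasurableSet FN')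
    (hFN'small : μ (FN \ FN') < ENNReal.ofReal η * μ FN)
    (hfolner : ∀ h ∈ FN', μ (symmDiff FK (h • FK)) < ENNReal.ofReal η * μ FK)
    (x : B) :
    ‖((μ FK).toReal⁻¹ • ∫ g in FK, π g⁻¹ x ∂μ) -
      ((μ FK).toReal⁻¹ • ∫ g in FK, π g⁻¹ ((μ FN).toReal⁻¹ • ∫ h in FN, π h⁻¹ x ∂μ) ∂μ)‖
      ≤ 3 * η * ‖x‖ := by
  have hsmall : μ (closure FN \ FN') ≤ ENNReal.ofReal η * μ (closure FN) := by
    rw [hFNc.measure_closure, Set.sdiff_eq, Set.inter_comm,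
      ← Measure.restrict_apply hFN'meas.compl, hFNc.restrict_closure,
      Measure.restrict_apply hFN'meas.compl, Set.inter_comm, ← Set.sdiff_eq]
    exact hFN'small.le
  have hfolner' : ∀ h ∈ FN', μ (closure FK ∆ (h • closure FK)) ≤
      ENNReal.ofReal η * μ (closure FK) := fun h hh => by
    rw [← closure_smul, hFKc.measure_closure]
    exact (hFKc.measure_closure_symmDiff_closure_le (hFKc.smul h) μ).trans (hfolner h hh).le
  simp only [← measureReal_def, ← setAverage_eq]
  rw [← hFKc.restrict_closure μ, ← hFNc.restrict_closure μ]
  exact norm_setAverage_sub_setAverage_setAverage_le μ π hπ hmeas hFN'meas measurableSet_closure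
    (hFN'sub.trans subset_closure) (by rw [hFNc.measure_closure]; exact hFNpos.ne')
    (by rw [hFNc.measure_closure]; exact hFNfin.ne) (by rw [hFKc.measure_closure]; exact hFKfin.ne)
    hη.le hsmall hfolner' x

/-- Continuous averaging lemma: if most `h ∈ F_N` move `F_K` by less than `η·m(F_K)`, then
`‖A_K x − A_K A_N x‖ ≤ 3η‖x‖`. -/
theorem stmt_15 {G : Type*} [Group G] [TopologicalSpace G] [IsTopologicalGroup G]
    [LocallyCompactSpace G] [SecondCountableTopology G]
    [MeasurableSpace G] [BorelSpace G]
    (μ : Measure G) [μ.IsHaarMeasure]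
    {B : Type*} [NormedAddCommGroup B] [NormedSpace ℝ B] [CompleteSpace B]
    (π : G →* (B →L[ℝ] B)) (hπ : ∀ g : G, ‖π g‖ ≤ 1)
    (hmeas : ∀ x : B, StronglyMeasurable fun g => π g x)
    (FN FK : Set G) (hFNc : IsCompact FN) (hFKc : IsCompact FK)
    (hFNpos : 0 < μ FN) (hFNfin : μ FN < ⊤) (hFKpos : 0 < μ FK) (hFKfin : μ FK < ⊤)
    (η : ℝ) (hη : 0 < η)
    (FN' : Set G) (hFN'sub : FN' ⊆ FN) (hFN'meas : MeasurableSet FN')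
    (hFN'small : μ (FN \ FN') < ENNReal.ofReal η * μ FN)
    (hfolner : ∀ h ∈ FN', μ (symmDiff FK (h • FK)) < ENNReal.ofReal η * μ FK)
    (x : B) :
    ‖((μ FK).toReal⁻¹ • ∫ g in FK, π g⁻¹ x ∂μ) -
      ((μ FK).toReal⁻¹ • ∫ g in FK, π g⁻¹ ((μ FN).toReal⁻¹ • ∫ h in FN, π h⁻¹ x ∂μ) ∂μ)‖
      ≤ 3 * η * ‖x‖ :=
  stmt_15_general μ π hπ hmeas FN FK hFNc hFKc hFNpos hFNfin hFKfin η hη FN' hFN'sub hFN'meas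
    hFN'small hfolner x
end

section
/- (Mean ergodic theorem for amenable groups on uniformly convex spaces.) Let G be a locally compact second countable topological group with left Haar measure m and a Fřlner sequence (F_n) of compact subsets of positive finite Haar measure. Let B be a uniformly convex Banach space, and let π : G → L(B,B) be a group homomorphism into bounded linear operators with ‖π(g)‖ ≤ 1 for all g ∈ G, such that for every x ∈ B the map g ↦ π(g)x is strongly measurable. Define A_n x := (1/m(F_n)) ∫_{F_n} π(g⁻¹)x dm(g) (Bochner integral). Then for every x ∈ B, the sequence (A_n x) converges in norm; moreover lim_{n→∞} ‖A_n x‖ = inf_n ‖A_n x‖. -/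
set_option linter.unusedSectionVars false

open MeasureTheory Filter Pointwise

section Aux

variable {G : Type*} [Group G] [TopologicalSpace G] [IsTopologicalGroup G]
  [MeasurableSpace G] [BorelSpace G]
  {B : Type*} [NormedAddCommGroup B] [NormedSpace ℝ B] [CompleteSpace B]

/-- Pointwise norm bound. -/
lemma ergAux_bound (π : G →* (B →L[ℝ] B)) (hπ : ∀ g : G, ‖π g‖ ≤ 1) (g : G) (x : B) :
    ‖π g x‖ ≤ ‖x‖ :=
  ((π g).le_opNorm x).trans (mul_le_of_le_one_left (norm_nonneg x) (hπ g))

lemma ergAux_sm (π : G →* (B →L[ℝ] B))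
    (hmeas : ∀ x : B, StronglyMeasurable fun g => π g x) (x : B) :
    StronglyMeasurable fun g : G => π g⁻¹ x :=
  (hmeas x).comp_measurable measurable_inv

lemma ergAux_integrable (μ : Measure G) (π : G →* (B →L[ℝ] B))
    (hπ : ∀ g : G, ‖π g‖ ≤ 1) (hmeas : ∀ x : B, StronglyMeasurable fun g => π g x)
    (x : B) {s : Set G} (hs : μ s < ⊤) :
    IntegrableOn (fun g => π g⁻¹ x) s μ := by
  have : IsFiniteMeasure (μ.restrict s) :=
    ⟨by simpa [Measure.restrict_apply_univ] using hs⟩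
  exact ⟨(ergAux_sm π hmeas x).aestronglyMeasurable,
    HasFiniteIntegral.of_bounded (C := ‖x‖)
      (Eventually.of_forall fun g => ergAux_bound π hπ g⁻¹ x)⟩

/-- The ergodic averaging operator over a set `s`, as a continuous linear map. -/
noncomputable def ergAvgCLM (μ : Measure G) (π : G →* (B →L[ℝ] B))
    (hπ : ∀ g : G, ‖π g‖ ≤ 1) (hmeas : ∀ x : B, StronglyMeasurable fun g => π g x)
    (s : Set G) (hs : μ s < ⊤) : B →L[ℝ] B :=
  LinearMap.mkContinuous
    { toFun := fun x => (μ s).toReal⁻¹ • ∫ g in s, π g⁻¹ x ∂μ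
      map_add' := fun x y => by
        simp only [map_add]
        rw [integral_add (ergAux_integrable μ π hπ hmeas x hs)
          (ergAux_integrable μ π hπ hmeas y hs), smul_add]
      map_smul' := fun c x => by
        simp only [ContinuousLinearMap.map_smul, RingHom.id_apply]
        rw [integral_smul, smul_comm] }
    1 (by
      intro x
      simp only [LinearMap.coe_mk, AddHom.coe_mk, one_mul]
      rw [norm_smul, norm_inv, Real.norm_eq_abs, abs_of_nonneg ENNReal.toReal_nonneg]
      calc (μ s).toReal⁻¹ * ‖∫ g in s, π g⁻¹ x ∂μ‖
          ≤ (μ s).toReal⁻¹ * (‖x‖ * (μ s).toReal) := by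
            apply mul_le_mul_of_nonneg_left _ (inv_nonneg.2 ENNReal.toReal_nonneg)
            exact norm_setIntegral_le_of_norm_le_const hs
              (fun g _ => ergAux_bound π hπ g⁻¹ x)
        _ = ‖x‖ * ((μ s).toReal⁻¹ * (μ s).toReal) := by ring
        _ ≤ ‖x‖ * 1 := by
            apply mul_le_mul_of_nonneg_left _ (norm_nonneg x)
            rcases eq_or_ne (μ s).toReal 0 with h | h
            · simp [h]
            · rw [inv_mul_cancel₀ h]
        _ = ‖x‖ := mul_one _)

lemma ergAvgCLM_apply (μ : Measure G) (π : G →* (B →L[ℝ] B))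
    (hπ : ∀ g : G, ‖π g‖ ≤ 1) (hmeas : ∀ x : B, StronglyMeasurable fun g => π g x)
    (s : Set G) (hs : μ s < ⊤) (x : B) :
    ergAvgCLM μ π hπ hmeas s hs x = (μ s).toReal⁻¹ • ∫ g in s, π g⁻¹ x ∂μ := rfl

lemma ergAvgCLM_norm_le (μ : Measure G) (π : G →* (B →L[ℝ] B))
    (hπ : ∀ g : G, ‖π g‖ ≤ 1) (hmeas : ∀ x : B, StronglyMeasurable fun g => π g x)
    (s : Set G) (hs : μ s < ⊤) (x : B) :
    ‖ergAvgCLM μ π hπ hmeas s hs x‖ ≤ ‖x‖ := by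
  have := (ergAvgCLM μ π hπ hmeas s hs).le_of_opNorm_le
    (LinearMap.mkContinuous_norm_le _ zero_le_one _) x
  simpa using this

lemma ergAux_null_smul (μ : Measure G) [μ.IsHaarMeasure] {s : Set G}
    (hnull : NullMeasurableSet s μ) (g : G) : NullMeasurableSet (g • s) μ := by
  have hmp : MeasurePreserving (fun h : G => g⁻¹ * h) μ μ :=
    ⟨measurable_const_mul _, map_mul_left_eq_self μ g⁻¹⟩
  have : g • s = (fun h : G => g⁻¹ * h) ⁻¹' s := by
    ext h
    simp [Set.mem_smul_set_iff_inv_smul_mem, smul_eq_mul]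
  rw [this]
  exact hnull.preimage hmp.quasiMeasurePreserving

/-- The key shift estimate. -/
lemma ergAvgCLM_shift (μ : Measure G) [μ.IsHaarMeasure] (π : G →* (B →L[ℝ] B))
    (hπ : ∀ g : G, ‖π g‖ ≤ 1) (hmeas : ∀ x : B, StronglyMeasurable fun g => π g x)
    (s : Set G) (hnull : NullMeasurableSet s μ) (hs : μ s < ⊤) (g : G) (x : B) :
    ‖ergAvgCLM μ π hπ hmeas s hs (π g⁻¹ x) - ergAvgCLM μ π hπ hmeas s hs x‖
      ≤ (μ s).toReal⁻¹ * ((μ (symmDiff s (g • s))).toReal * ‖x‖) := by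
  have hnull_gs : NullMeasurableSet (g • s) μ := ergAux_null_smul μ hnull g
  have hμgs : μ (g • s) = μ s := MeasureTheory.measure_smul μ g s
  have hgs_fin : μ (g • s) < ⊤ := by rw [hμgs]; exact hs
  -- step 1 : rewrite the integrand
  have step1 : ∫ h in s, π h⁻¹ (π g⁻¹ x) ∂μ = ∫ h in s, π (g * h)⁻¹ x ∂μ := by
    apply integral_congr_ae
    apply Eventually.of_forall
    intro h
    simp [mul_inv_rev, map_mul, ContinuousLinearMap.mul_apply]
  -- step 2 : change variables
  have hemb : MeasurableEmbedding (fun h : G => g * h) :=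
    (Homeomorph.mulLeft g).measurableEmbedding
  have step2 : ∫ h in s, π (g * h)⁻¹ x ∂μ = ∫ h in g • s, π h⁻¹ x ∂μ := by
    have hmap : Measure.map (fun h : G => g * h) μ = μ := map_mul_left_eq_self μ g
    have hpre : (fun h : G => g * h) ⁻¹' (g • s) = s := by
      ext h
      simp [Set.mem_smul_set_iff_inv_smul_mem, smul_eq_mul]
    calc ∫ h in s, π (g * h)⁻¹ x ∂μ
        = ∫ h in (fun h : G => g * h) ⁻¹' (g • s), π (g * h)⁻¹ x ∂μ := by rw [hpre]
      _ = ∫ h in g • s, π h⁻¹ x ∂(Measure.map (fun h : G => g * h) μ) :=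
          (hemb.setIntegral_map (fun h => π h⁻¹ x) (g • s)).symm
      _ = ∫ h in g • s, π h⁻¹ x ∂μ := by rw [hmap]
  -- step 3 : compare the two integrals
  have hi1 : IntegrableOn (fun h => π h⁻¹ x) s μ := ergAux_integrable μ π hπ hmeas x hs
  have hi2 : IntegrableOn (fun h => π h⁻¹ x) (g • s) μ :=
    ergAux_integrable μ π hπ hmeas x hgs_fin
  have hsplit1 : ∫ h in g • s, π h⁻¹ x ∂μ
      = (∫ h in (g • s) ∩ s, π h⁻¹ x ∂μ) + ∫ h in (g • s) \ s, π h⁻¹ x ∂μ :=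
    (integral_inter_add_diff₀ hnull hi2).symm
  have hsplit2 : ∫ h in s, π h⁻¹ x ∂μ
      = (∫ h in s ∩ (g • s), π h⁻¹ x ∂μ) + ∫ h in s \ (g • s), π h⁻¹ x ∂μ :=
    (integral_inter_add_diff₀ hnull_gs hi1).symm
  have hdiff : (∫ h in g • s, π h⁻¹ x ∂μ) - ∫ h in s, π h⁻¹ x ∂μ
      = (∫ h in (g • s) \ s, π h⁻¹ x ∂μ) - ∫ h in s \ (g • s), π h⁻¹ x ∂μ := by
    rw [hsplit1, hsplit2, Set.inter_comm]; abel
  -- norm bounds on the pieces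
  have hb1 : ‖∫ h in (g • s) \ s, π h⁻¹ x ∂μ‖ ≤ ‖x‖ * (μ ((g • s) \ s)).toReal :=
    norm_setIntegral_le_of_norm_le_const
      (lt_of_le_of_lt (measure_mono Set.diff_subset) hgs_fin)
      (fun h _ => ergAux_bound π hπ h⁻¹ x)
  have hb2 : ‖∫ h in s \ (g • s), π h⁻¹ x ∂μ‖ ≤ ‖x‖ * (μ (s \ (g • s))).toReal :=
    norm_setIntegral_le_of_norm_le_const
      (lt_of_le_of_lt (measure_mono Set.diff_subset) hs)
      (fun h _ => ergAux_bound π hπ h⁻¹ x)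
  -- symmDiff measure
  have hsymm : (μ (symmDiff s (g • s))).toReal
      = (μ (s \ (g • s))).toReal + (μ ((g • s) \ s)).toReal := by
    rw [Set.symmDiff_def]
    rw [measure_union₀ (hnull_gs.diff hnull) disjoint_sdiff_sdiff.aedisjoint]
    rw [ENNReal.toReal_add
      ((measure_mono Set.diff_subset).trans_lt hs).ne
      ((measure_mono Set.diff_subset).trans_lt hgs_fin).ne]
  -- put it together
  rw [ergAvgCLM_apply, ergAvgCLM_apply, step1, step2, ← smul_sub, norm_smul,
    norm_inv, Real.norm_eq_abs, abs_of_nonneg ENNReal.toReal_nonneg]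
  apply mul_le_mul_of_nonneg_left _ (inv_nonneg.2 ENNReal.toReal_nonneg)
  rw [hdiff, hsymm]
  calc ‖(∫ h in (g • s) \ s, π h⁻¹ x ∂μ) - ∫ h in s \ (g • s), π h⁻¹ x ∂μ‖
      ≤ ‖∫ h in (g • s) \ s, π h⁻¹ x ∂μ‖ + ‖∫ h in s \ (g • s), π h⁻¹ x ∂μ‖ :=
        norm_sub_le _ _
    _ ≤ ‖x‖ * (μ ((g • s) \ s)).toReal + ‖x‖ * (μ (s \ (g • s))).toReal :=
        add_le_add hb1 hb2
    _ = ((μ (s \ (g • s))).toReal + (μ ((g • s) \ s)).toReal) * ‖x‖ := by ring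

end Aux
/-- Mean ergodic theorem for amenable groups acting on uniformly convex Banach spaces:
the Følner ergodic averages converge in norm, and the limit of the norms is the
infimum of the norms. -/
theorem stmt_16 {G : Type*} [Group G] [TopologicalSpace G] [IsTopologicalGroup G]
    [LocallyCompactSpace G] [SecondCountableTopology G]
    [MeasurableSpace G] [BorelSpace G]
    (μ : Measure G) [μ.IsHaarMeasure]
    (F : ℕ → Set G) (hFcpt : ∀ n, IsCompact (F n))
    (hFpos : ∀ n, 0 < μ (F n)) (hFfin : ∀ n, μ (F n) < ⊤)
    (hFolner : ∀ K : Set G, IsCompact K → 0 < μ K → ∀ ε : ℝ, 0 < ε → ∃ N : ℕ, ∀ n ≥ N,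
      ∃ K' ⊆ K, MeasurableSet K' ∧ μ (K \ K') < ENNReal.ofReal ε * μ K ∧
        ∀ k ∈ K', μ (symmDiff (F n) (k • F n)) < ENNReal.ofReal ε * μ (F n))
    {B : Type*} [NormedAddCommGroup B] [NormedSpace ℝ B] [CompleteSpace B]
    [UniformConvexSpace B]
    (π : G →* (B →L[ℝ] B)) (hπ : ∀ g : G, ‖π g‖ ≤ 1)
    (hmeas : ∀ x : B, StronglyMeasurable fun g => π g x) :
    ∀ x : B, ∃ y : B,
      Tendsto (fun n => (μ (F n)).toReal⁻¹ • ∫ g in F n, π g⁻¹ x ∂μ) atTop (nhds y) ∧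
      Tendsto (fun n => ‖(μ (F n)).toReal⁻¹ • ∫ g in F n, π g⁻¹ x ∂μ‖) atTop
        (nhds (⨅ n : ℕ, ‖(μ (F n)).toReal⁻¹ • ∫ g in F n, π g⁻¹ x ∂μ‖)) := by
  intro x
  classical
  set T : ℕ → B →L[ℝ] B := fun n => ergAvgCLM μ π hπ hmeas (F n) (hFfin n) with hT
  suffices h : ∃ y, Tendsto (fun n => T n x) atTop (nhds y) ∧
      Tendsto (fun n => ‖T n x‖) atTop (nhds (⨅ n : ℕ, ‖T n x‖)) by exact h
  have hc : ∀ n, 0 < (μ (F n)).toReal := fun n =>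
    ENNReal.toReal_pos (hFpos n).ne' (hFfin n).ne
  -- every `F m` is null measurable, thanks to the Følner property
  have hnullF : ∀ m : ℕ, NullMeasurableSet (F m) μ := by
    intro m
    have hex : ∀ j : ℕ, ∃ K', K' ⊆ F m ∧ MeasurableSet K' ∧
        μ (F m \ K') < ENNReal.ofReal (1 / (j + 1)) * μ (F m) := by
      intro j
      obtain ⟨N, hN⟩ := hFolner (F m) (hFcpt m) (hFpos m) (1 / (j + 1)) (by positivity)
      obtain ⟨K', h1, h2, h3, _⟩ := hN N le_rfl
      exact ⟨K', h1, h2, h3⟩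
    choose K hKsub hKmeas hKsmall using hex
    set U : Set G := ⋃ j, K j with hU
    have hUmeas : MeasurableSet U := MeasurableSet.iUnion hKmeas
    have hUsub : U ⊆ F m := Set.iUnion_subset hKsub
    have hnul : μ (F m \ U) = 0 := by
      have hle : ∀ j : ℕ, μ (F m \ U) ≤ ENNReal.ofReal (1 / (j + 1)) * μ (F m) := fun j =>
        le_trans (measure_mono (Set.diff_subset_diff_right (Set.subset_iUnion K j)))
          (hKsmall j).le
      have htend : Tendsto (fun j : ℕ => ENNReal.ofReal (1 / (j + 1)) * μ (F m))
          atTop (nhds 0) := by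
        have h0 : Tendsto (fun j : ℕ => ENNReal.ofReal (1 / (j + 1))) atTop (nhds 0) := by
          rw [show (0 : ENNReal) = ENNReal.ofReal 0 by simp]
          exact ENNReal.tendsto_ofReal tendsto_one_div_add_atTop_nhds_zero_nat
        simpa using ENNReal.Tendsto.mul_const h0 (Or.inr (hFfin m).ne)
      exact le_antisymm (ge_of_tendsto' htend hle) (by positivity)
    have hFU : F m = U ∪ (F m \ U) := (Set.union_diff_cancel hUsub).symm
    rw [hFU]
    exact hUmeas.nullMeasurableSet.union (NullMeasurableSet.of_null hnul)
  -- KEY estimate : `T n (T m x)` is close to `T n x` for large `n`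
  have key : ∀ (m : ℕ) (ε : ℝ), 0 < ε → ∃ N, ∀ n ≥ N, ‖T n (T m x) - T n x‖ ≤ ε := by
    intro m ε hε
    have hxpos : (0 : ℝ) < ‖x‖ + 1 := by positivity
    set ε' : ℝ := ε / (3 * (‖x‖ + 1)) with hε'def
    have hε'pos : 0 < ε' := by positivity
    obtain ⟨N, hN⟩ := hFolner (F m) (hFcpt m) (hFpos m) ε' hε'pos
    refine ⟨N, fun n hn => ?_⟩
    obtain ⟨K', hK'sub, hK'meas, hK'small, hK'inv⟩ := hN n hn
    have hint_m : IntegrableOn (fun g => π g⁻¹ x) (F m) μ :=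
      ergAux_integrable μ π hπ hmeas x (hFfin m)
    have hfinrestr : IsFiniteMeasure (μ.restrict (F m)) :=
      ⟨by simpa [Measure.restrict_apply_univ] using hFfin m⟩
    have hia : IntegrableOn (fun g => T n (π g⁻¹ x)) (F m) μ :=
      (T n).integrable_comp hint_m
    have hib : IntegrableOn (fun _ : G => T n x) (F m) μ := integrable_const _
    have h1 : T n (T m x) = (μ (F m)).toReal⁻¹ • ∫ g in F m, T n (π g⁻¹ x) ∂μ := by
      have : T m x = (μ (F m)).toReal⁻¹ • ∫ g in F m, π g⁻¹ x ∂μ := rfl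
      rw [this, (T n).map_smul]
      congr 1
      exact ((T n).integral_comp_comm hint_m).symm
    have h2 : T n x = (μ (F m)).toReal⁻¹ • ∫ _ in F m, T n x ∂μ := by
      rw [setIntegral_const, smul_smul, measureReal_def, inv_mul_cancel₀ (hc m).ne', one_smul]
    have h3 : T n (T m x) - T n x
        = (μ (F m)).toReal⁻¹ • ∫ g in F m, (T n (π g⁻¹ x) - T n x) ∂μ := by
      rw [integral_sub hia hib, smul_sub, ← h1, ← h2]
    -- split the integral over `K'` and `F m \ K'`
    have hInt : IntegrableOn (fun g => T n (π g⁻¹ x) - T n x) (F m) μ := hia.sub hib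
    have hsplit : ∫ g in F m, (T n (π g⁻¹ x) - T n x) ∂μ
        = (∫ g in F m ∩ K', (T n (π g⁻¹ x) - T n x) ∂μ)
          + ∫ g in F m \ K', (T n (π g⁻¹ x) - T n x) ∂μ :=
      (integral_inter_add_diff hK'meas hInt).symm
    have hcap : F m ∩ K' = K' := Set.inter_eq_self_of_subset_right hK'sub
    -- bound on K'
    have hbK : ∀ g ∈ K', ‖T n (π g⁻¹ x) - T n x‖ ≤ ε' * ‖x‖ := by
      intro g hg
      have hshift := ergAvgCLM_shift μ π hπ hmeas (F n) (hnullF n) (hFfin n) g x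
      have hΔ := hK'inv g hg
      have hμΔ : (μ (symmDiff (F n) (g • F n))).toReal ≤ ε' * (μ (F n)).toReal := by
        have hfin : ENNReal.ofReal ε' * μ (F n) ≠ ⊤ :=
          ENNReal.mul_ne_top ENNReal.ofReal_ne_top (hFfin n).ne
        have := ENNReal.toReal_mono hfin hΔ.le
        rwa [ENNReal.toReal_mul, ENNReal.toReal_ofReal hε'pos.le] at this
      calc ‖T n (π g⁻¹ x) - T n x‖
          ≤ (μ (F n)).toReal⁻¹ * ((μ (symmDiff (F n) (g • F n))).toReal * ‖x‖) := hshift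
        _ ≤ (μ (F n)).toReal⁻¹ * ((ε' * (μ (F n)).toReal) * ‖x‖) := by
            apply mul_le_mul_of_nonneg_left _ (inv_nonneg.2 ENNReal.toReal_nonneg)
            exact mul_le_mul_of_nonneg_right hμΔ (norm_nonneg x)
        _ = ((μ (F n)).toReal⁻¹ * (μ (F n)).toReal) * (ε' * ‖x‖) := by ring
        _ = ε' * ‖x‖ := by rw [inv_mul_cancel₀ (hc n).ne', one_mul]
    have hsmK : AEStronglyMeasurable (fun g => T n (π g⁻¹ x) - T n x) (μ.restrict K') :=
      (((T n).continuous.comp_stronglyMeasurable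
        (ergAux_sm π hmeas x)).sub stronglyMeasurable_const).aestronglyMeasurable
    have hsmFK : AEStronglyMeasurable (fun g => T n (π g⁻¹ x) - T n x)
        (μ.restrict (F m \ K')) :=
      (((T n).continuous.comp_stronglyMeasurable
        (ergAux_sm π hmeas x)).sub stronglyMeasurable_const).aestronglyMeasurable
    have hμK'fin : μ K' < ⊤ := (measure_mono hK'sub).trans_lt (hFfin m)
    have hnormK : ‖∫ g in K', (T n (π g⁻¹ x) - T n x) ∂μ‖ ≤ (ε' * ‖x‖) * (μ K').toReal :=
      norm_setIntegral_le_of_norm_le_const hμK'fin hbK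
    have hbFK : ∀ g ∈ F m \ K', ‖T n (π g⁻¹ x) - T n x‖ ≤ 2 * ‖x‖ := by
      intro g _
      calc ‖T n (π g⁻¹ x) - T n x‖ ≤ ‖T n (π g⁻¹ x)‖ + ‖T n x‖ := norm_sub_le _ _
        _ ≤ ‖π g⁻¹ x‖ + ‖x‖ := add_le_add (ergAvgCLM_norm_le μ π hπ hmeas _ _ _)
            (ergAvgCLM_norm_le μ π hπ hmeas _ _ _)
        _ ≤ ‖x‖ + ‖x‖ := add_le_add_left (ergAux_bound π hπ g⁻¹ x) _
        _ = 2 * ‖x‖ := by ring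
    have hμFKfin : μ (F m \ K') < ⊤ := (measure_mono Set.diff_subset).trans_lt (hFfin m)
    have hnormFK : ‖∫ g in F m \ K', (T n (π g⁻¹ x) - T n x) ∂μ‖
        ≤ (2 * ‖x‖) * (μ (F m \ K')).toReal :=
      norm_setIntegral_le_of_norm_le_const hμFKfin hbFK
    have hμFK : (μ (F m \ K')).toReal ≤ ε' * (μ (F m)).toReal := by
      have hfin : ENNReal.ofReal ε' * μ (F m) ≠ ⊤ :=
        ENNReal.mul_ne_top ENNReal.ofReal_ne_top (hFfin m).ne
      have := ENNReal.toReal_mono hfin hK'small.le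
      rwa [ENNReal.toReal_mul, ENNReal.toReal_ofReal hε'pos.le] at this
    have hμK' : (μ K').toReal ≤ (μ (F m)).toReal :=
      ENNReal.toReal_mono (hFfin m).ne (measure_mono hK'sub)
    -- combine
    have hεid : ε' * (3 * (‖x‖ + 1)) = ε := div_mul_cancel₀ _ (by positivity)
    have hfinal : ‖T n (T m x) - T n x‖
        ≤ (μ (F m)).toReal⁻¹ * ((ε' * ‖x‖) * (μ (F m)).toReal
          + (2 * ‖x‖) * (ε' * (μ (F m)).toReal)) := by
      rw [h3, norm_smul, norm_inv, Real.norm_eq_abs, abs_of_nonneg ENNReal.toReal_nonneg]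
      apply mul_le_mul_of_nonneg_left _ (inv_nonneg.2 ENNReal.toReal_nonneg)
      rw [hsplit]
      calc ‖(∫ g in F m ∩ K', (T n (π g⁻¹ x) - T n x) ∂μ)
            + ∫ g in F m \ K', (T n (π g⁻¹ x) - T n x) ∂μ‖
          ≤ ‖∫ g in F m ∩ K', (T n (π g⁻¹ x) - T n x) ∂μ‖
            + ‖∫ g in F m \ K', (T n (π g⁻¹ x) - T n x) ∂μ‖ := norm_add_le _ _
        _ ≤ (ε' * ‖x‖) * (μ K').toReal + (2 * ‖x‖) * (μ (F m \ K')).toReal := by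
            rw [hcap]
            exact add_le_add hnormK hnormFK
        _ ≤ (ε' * ‖x‖) * (μ (F m)).toReal + (2 * ‖x‖) * (ε' * (μ (F m)).toReal) := by
            apply add_le_add
            · exact mul_le_mul_of_nonneg_left hμK' (by positivity)
            · exact mul_le_mul_of_nonneg_left hμFK (by positivity)
    calc ‖T n (T m x) - T n x‖
        ≤ (μ (F m)).toReal⁻¹ * ((ε' * ‖x‖) * (μ (F m)).toReal
          + (2 * ‖x‖) * (ε' * (μ (F m)).toReal)) := hfinal
      _ = ((μ (F m)).toReal⁻¹ * (μ (F m)).toReal) * (3 * ε' * ‖x‖) := by ring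
      _ = 3 * ε' * ‖x‖ := by rw [inv_mul_cancel₀ (hc m).ne', one_mul]
      _ ≤ ε := by nlinarith [hε'pos, norm_nonneg x]
  -- the norms converge to the infimum
  set L : ℝ := ⨅ n : ℕ, ‖T n x‖ with hL
  have hbdd : BddBelow (Set.range fun n : ℕ => ‖T n x‖) :=
    ⟨0, by rintro _ ⟨n, rfl⟩; exact norm_nonneg _⟩
  have hLle : ∀ n, L ≤ ‖T n x‖ := fun n => ciInf_le hbdd n
  have hLnn : 0 ≤ L := le_ciInf fun n => norm_nonneg _
  have hnormlim : Tendsto (fun n => ‖T n x‖) atTop (nhds L) := by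
    rw [Metric.tendsto_atTop]
    intro ε hε
    obtain ⟨m, hm⟩ := exists_lt_of_ciInf_lt (show L < L + ε / 2 by linarith)
    obtain ⟨N, hN⟩ := key m (ε / 2) (by linarith)
    refine ⟨N, fun n hn => ?_⟩
    have h1 : ‖T n x‖ ≤ ‖T m x‖ + ε / 2 := by
      calc ‖T n x‖ = ‖T n (T m x) - (T n (T m x) - T n x)‖ := by rw [sub_sub_cancel]
        _ ≤ ‖T n (T m x)‖ + ‖T n (T m x) - T n x‖ := norm_sub_le _ _
        _ ≤ ‖T m x‖ + ε / 2 :=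
            add_le_add (ergAvgCLM_norm_le μ π hπ hmeas _ _ _) (hN n hn)
    rw [Real.dist_eq, abs_lt]
    constructor <;> [linarith [hLle n]; linarith [hm]]
  -- midpoint lower bound
  have mid : ∀ n m : ℕ, 2 * L ≤ ‖T n x + T m x‖ := by
    intro n m
    apply le_of_forall_pos_le_add
    intro θ hθ
    obtain ⟨N1, h1⟩ := key n (θ / 2) (by linarith)
    obtain ⟨N2, h2⟩ := key m (θ / 2) (by linarith)
    set k := max N1 N2
    have e1 := h1 k (le_max_left _ _)
    have e2 := h2 k (le_max_right _ _)
    have habel : T k x + T k x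
        = (T k (T n x) + T k (T m x)) + ((T k x - T k (T n x)) + (T k x - T k (T m x))) := by
      abel
    have hnn : 2 * ‖T k x‖ = ‖T k x + T k x‖ := by
      rw [show T k x + T k x = (2 : ℝ) • T k x by rw [two_smul], norm_smul]
      simp
    have hstep : 2 * ‖T k x‖ ≤ ‖T k (T n x) + T k (T m x)‖ + θ := by
      rw [hnn, habel]
      calc ‖(T k (T n x) + T k (T m x)) + ((T k x - T k (T n x)) + (T k x - T k (T m x)))‖
          ≤ ‖T k (T n x) + T k (T m x)‖ + ‖(T k x - T k (T n x)) + (T k x - T k (T m x))‖ :=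
            norm_add_le _ _
        _ ≤ ‖T k (T n x) + T k (T m x)‖ + (‖T k x - T k (T n x)‖ + ‖T k x - T k (T m x)‖) := by
            gcongr
            exact norm_add_le _ _
        _ ≤ ‖T k (T n x) + T k (T m x)‖ + (θ / 2 + θ / 2) := by
            gcongr
            · rw [norm_sub_rev]; exact e1
            · rw [norm_sub_rev]; exact e2
        _ = ‖T k (T n x) + T k (T m x)‖ + θ := by ring
    have hTsum : ‖T k (T n x) + T k (T m x)‖ ≤ ‖T n x + T m x‖ := by
      rw [← map_add]
      exact ergAvgCLM_norm_le μ π hπ hmeas _ _ _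
    linarith [hLle k]
  -- Cauchy sequence
  have hcauchy : CauchySeq (fun n => T n x) := by
    rw [Metric.cauchySeq_iff]
    intro ε hε
    rcases eq_or_lt_of_le hLnn with hL0 | hLpos
    · -- L = 0
      obtain ⟨N, hN⟩ := (Metric.tendsto_atTop.1 hnormlim) (ε / 2) (by linarith)
      refine ⟨N, fun m hm n hn => ?_⟩
      have hm' := hN m hm
      have hn' := hN n hn
      rw [Real.dist_eq, ← hL0] at hm' hn'
      have hm'' : ‖T m x‖ < ε / 2 := by simpa using hm'
      have hn'' : ‖T n x‖ < ε / 2 := by simpa using hn'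
      calc dist (T m x) (T n x) = ‖T m x - T n x‖ := dist_eq_norm _ _
        _ ≤ ‖T m x‖ + ‖T n x‖ := norm_sub_le _ _
        _ < ε := by linarith
    · -- 0 < L
      have hL1 : (0 : ℝ) < L + 1 := by linarith
      obtain ⟨δ, hδpos, hδ⟩ := exists_forall_closed_ball_dist_add_le_two_sub B
        (div_pos hε hL1)
      set η : ℝ := min 1 (δ * L / 4) with hη
      have hηpos : 0 < η := lt_min one_pos (by positivity)
      have hη1 : η ≤ 1 := min_le_left _ _
      have hη2 : η ≤ δ * L / 4 := min_le_right _ _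
      obtain ⟨N, hN⟩ := (Metric.tendsto_atTop.1 hnormlim) η hηpos
      refine ⟨N, fun m hm n hn => ?_⟩
      have hbm : ‖T m x‖ ≤ L + η := by
        have := abs_lt.1 (by simpa [Real.dist_eq] using hN m hm)
        linarith [this.2]
      have hbn : ‖T n x‖ ≤ L + η := by
        have := abs_lt.1 (by simpa [Real.dist_eq] using hN n hn)
        linarith [this.2]
      by_contra hcon
      push_neg at hcon
      rw [dist_eq_norm] at hcon
      set r : ℝ := L + η with hr
      have hrpos : 0 < r := by positivity
      have hrle : r ≤ L + 1 := by simp only [hr]; linarith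
      have hu : ‖r⁻¹ • T m x‖ ≤ 1 := by
        rw [norm_smul, norm_inv, Real.norm_eq_abs, abs_of_pos hrpos]
        rw [inv_mul_le_one₀ hrpos]
        exact hbm
      have hv : ‖r⁻¹ • T n x‖ ≤ 1 := by
        rw [norm_smul, norm_inv, Real.norm_eq_abs, abs_of_pos hrpos]
        rw [inv_mul_le_one₀ hrpos]
        exact hbn
      have hsep : ε / (L + 1) ≤ ‖r⁻¹ • T m x - r⁻¹ • T n x‖ := by
        rw [← smul_sub, norm_smul, norm_inv, Real.norm_eq_abs, abs_of_pos hrpos]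
        calc ε / (L + 1) ≤ ε / r := div_le_div_of_nonneg_left hε.le hrpos hrle
          _ = r⁻¹ * ε := by rw [div_eq_inv_mul]
          _ ≤ r⁻¹ * ‖T m x - T n x‖ :=
              mul_le_mul_of_nonneg_left hcon (inv_nonneg.2 hrpos.le)
      have hconv := hδ hu hv hsep
      have hsum : ‖T m x + T n x‖ ≤ (2 - δ) * r := by
        have : ‖r⁻¹ • T m x + r⁻¹ • T n x‖ ≤ 2 - δ := hconv
        rw [← smul_add, norm_smul, norm_inv, Real.norm_eq_abs, abs_of_pos hrpos] at this
        calc ‖T m x + T n x‖ = r * (r⁻¹ * ‖T m x + T n x‖) := by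
              rw [← mul_assoc, mul_inv_cancel₀ hrpos.ne', one_mul]
          _ ≤ r * (2 - δ) := mul_le_mul_of_nonneg_left this hrpos.le
          _ = (2 - δ) * r := mul_comm _ _
      have hmid := mid m n
      have : 2 * L ≤ (2 - δ) * (L + η) := le_trans hmid (by rwa [hr] at hsum)
      nlinarith [hδpos, hLpos, hηpos, hη2]
  obtain ⟨y, hy⟩ := cauchySeq_tendsto_of_complete hcauchy
  exact ⟨y, hy, hnormlim⟩
end

section
/- (Main fluctuation bound.) Let G be a locally compact second countable topological group with left Haar measure m and a Fřlner sequence (F_n) of compact subsets of positive finite Haar measure, and let β(n, ε) be a Fřlner convergence modulus for (F_n) which is nondecreasing in n. Let B be a Banach space with a modulus of uniform convexity u, and let π : G → L(B,B) be a group homomorphism into bounded linear operators with ‖π(g)‖ ≤ 1 such that g ↦ π(g)x is strongly measurable for every x; set A_n x := (1/m(F_n)) ∫_{F_n} π(g⁻¹)x dm(g). Fix ε > 0, x ∈ B with 0 < ‖x‖ ≤ 1, and η with 0 < η < u(ε)/2. Then every finite sequence of indices n_1 < n_2 < ⋯ < n_{k+1} satisfying n_{i+1} ≥ β(n_i, η/(3‖x‖))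 and ‖A_{n_i} x − A_{n_{i+1}} x‖ ≥ ε for all 1 ≤ i ≤ k has k ≤ ⌊2‖x‖/(u(ε) − 2η)⌋. Moreover, if L ≥ 0 satisfies ‖A_n x‖ ≥ L for all n, then k ≤ ⌊2(‖x‖ − L)/(u(ε) − 2η)⌋. -/
open MeasureTheory Filter Pointwise

namespace Stmt17Aux

variable {G : Type*} [Group G] [MeasurableSpace G]
variable {B : Type*} [NormedAddCommGroup B] [NormedSpace ℝ B] [CompleteSpace B]

lemma norm_setIntegral_le {μ : Measure G} {f : G → B} {S : Set G} {C : ℝ}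
    (hSfin : μ S ≠ ⊤) (hC : ∀ᵐ g ∂μ.restrict S, ‖f g‖ ≤ C) :
    ‖∫ g in S, f g ∂μ‖ ≤ C * (μ S).toReal := by
  haveI : IsFiniteMeasure (μ.restrict S) :=
    ⟨by rw [Measure.restrict_apply_univ]; exact hSfin.lt_top⟩
  simpa [Measure.restrict_apply_univ, Measure.real] using
    norm_integral_le_of_norm_le_const (μ := μ.restrict S) (f := f) (C := C) hC

lemma norm_pi_apply_le (π : G →* (B →L[ℝ] B)) (hπ : ∀ g : G, ‖π g‖ ≤ 1) (y : B) (g : G) :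
    ‖π g⁻¹ y‖ ≤ ‖y‖ := by
  calc ‖π g⁻¹ y‖ ≤ ‖π g⁻¹‖ * ‖y‖ := (π g⁻¹).le_opNorm y
  _ ≤ 1 * ‖y‖ := mul_le_mul_of_nonneg_right (hπ _) (norm_nonneg _)
  _ = ‖y‖ := one_mul _

lemma sm_pi [MeasurableInv G] (π : G →* (B →L[ℝ] B))
    (hmeas : ∀ x : B, StronglyMeasurable fun g => π g x) (y : B) :
    StronglyMeasurable fun g : G => π g⁻¹ y :=
  (hmeas y).comp_measurable measurable_inv

lemma intOn [MeasurableInv G] {μ : Measure G} (π : G →* (B →L[ℝ] B))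
    (hπ : ∀ g : G, ‖π g‖ ≤ 1) (hmeas : ∀ x : B, StronglyMeasurable fun g => π g x)
    (y : B) {S : Set G} (hSfin : μ S ≠ ⊤) :
    IntegrableOn (fun g : G => π g⁻¹ y) S μ :=
  Measure.integrableOn_of_bounded hSfin (sm_pi π hmeas y).aestronglyMeasurable
    (ae_of_all _ fun g => norm_pi_apply_le π hπ y g)

lemma translate {μ : Measure G} [μ.IsMulLeftInvariant] [MeasurableMul G]
    (f : G → B) (h : G) (S : Set G) :
    ∫ g in S, f (h * g) ∂μ = ∫ g in h • S, f g ∂μ := by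
  have hme : MeasurableEmbedding (fun g : G => h * g) :=
    (MeasurableEquiv.mulLeft h).measurableEmbedding
  have hpre : (fun g : G => h * g) ⁻¹' (h • S) = S := by
    ext g
    simp [Set.mem_smul_set_iff_inv_smul_mem, smul_eq_mul, mul_assoc]
  calc ∫ g in S, f (h * g) ∂μ
      = ∫ g in (fun g : G => h * g) ⁻¹' (h • S), f (h * g) ∂μ := by rw [hpre]
    _ = ∫ g in h • S, f g ∂(Measure.map (fun g : G => h * g) μ) :=
        (hme.setIntegral_map f (h • S)).symm
    _ = ∫ g in h • S, f g ∂μ := by rw [(measurePreserving_mul_left μ h).map_eq]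

lemma nm_smul [MeasurableSMul G G] {μ : Measure G} [SMulInvariantMeasure G G μ] {S : Set G}
    (hS : NullMeasurableSet S μ) (h : G) : NullMeasurableSet (h • S) μ := by
  obtain ⟨t, hts, htm, hst⟩ := hS.exists_measurable_subset_ae_eq
  refine (htm.const_smul h).nullMeasurableSet.congr ?_
  rw [MeasureTheory.ae_eq_set] at hst ⊢
  rw [← Set.smul_set_sdiff, ← Set.smul_set_sdiff, measure_smul, measure_smul]
  exact hst

lemma integral_diff_le {μ : Measure G} {f : G → B} {C : ℝ}
    (hfm : StronglyMeasurable f) (hC : ∀ g, ‖f g‖ ≤ C)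
    {S T : Set G} (hS : NullMeasurableSet S μ) (hT : NullMeasurableSet T μ)
    (hSfin : μ S ≠ ⊤) (hTfin : μ T ≠ ⊤) :
    ‖(∫ g in S, f g ∂μ) - ∫ g in T, f g ∂μ‖ ≤ (μ (symmDiff S T)).toReal * C := by
  have hCpos : 0 ≤ C := le_trans (norm_nonneg (f 1)) (hC 1)
  have hint : ∀ U : Set G, U ⊆ S ∪ T → IntegrableOn f U μ := by
    intro U hU
    refine IntegrableOn.mono_set ?_ hU
    exact Measure.integrableOn_of_bounded
      (ne_top_of_le_ne_top (ENNReal.add_ne_top.mpr ⟨hSfin, hTfin⟩) (measure_union_le S T))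
      hfm.aestronglyMeasurable (ae_of_all _ hC)
  have h1 : ∫ g in S, f g ∂μ = (∫ g in S \ T, f g ∂μ) + ∫ g in S ∩ T, f g ∂μ := by
    rw [← integral_union_ae (Set.disjoint_sdiff_inter (s := S) (t := T)).aedisjoint (hS.inter hT)
      (hint _ (le_trans Set.diff_subset Set.subset_union_left))
      (hint _ (le_trans Set.inter_subset_left Set.subset_union_left)),
      Set.diff_union_inter]
  have h2 : ∫ g in T, f g ∂μ = (∫ g in T \ S, f g ∂μ) + ∫ g in S ∩ T, f g ∂μ := by
    rw [Set.inter_comm, ← integral_union_ae (Set.disjoint_sdiff_inter (s := T) (t := S)).aedisjoint (hT.inter hS)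
      (hint _ (le_trans Set.diff_subset Set.subset_union_right))
      (hint _ (le_trans Set.inter_subset_left Set.subset_union_right)),
      Set.diff_union_inter]
  have h3 : (∫ g in S, f g ∂μ) - ∫ g in T, f g ∂μ
      = (∫ g in S \ T, f g ∂μ) - ∫ g in T \ S, f g ∂μ := by
    rw [h1, h2]; abel
  have hd1 : μ (S \ T) ≠ ⊤ := ne_top_of_le_ne_top hSfin (measure_mono Set.diff_subset)
  have hd2 : μ (T \ S) ≠ ⊤ := ne_top_of_le_ne_top hTfin (measure_mono Set.diff_subset)
  have hsd : (μ (symmDiff S T)).toReal = (μ (S \ T)).toReal + (μ (T \ S)).toReal := by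
    rw [Set.symmDiff_def, measure_union₀ (hT.diff hS) disjoint_sdiff_sdiff.aedisjoint,
      ENNReal.toReal_add hd1 hd2]
  rw [h3, hsd]
  calc ‖(∫ g in S \ T, f g ∂μ) - ∫ g in T \ S, f g ∂μ‖
      ≤ ‖∫ g in S \ T, f g ∂μ‖ + ‖∫ g in T \ S, f g ∂μ‖ := norm_sub_le _ _
    _ ≤ C * (μ (S \ T)).toReal + C * (μ (T \ S)).toReal := by
        gcongr
        · exact norm_setIntegral_le hd1 (ae_of_all _ hC)
        · exact norm_setIntegral_le hd2 (ae_of_all _ hC)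
    _ = ((μ (S \ T)).toReal + (μ (T \ S)).toReal) * C := by ring

lemma contract [MeasurableInv G] {μ : Measure G} {S : Set G} (hSfin : μ S ≠ ⊤)
    (π : G →* (B →L[ℝ] B)) (hπ : ∀ g : G, ‖π g‖ ≤ 1)
    (hmeas : ∀ x : B, StronglyMeasurable fun g => π g x) (y : B) :
    ‖(μ S).toReal⁻¹ • ∫ g in S, π g⁻¹ y ∂μ‖ ≤ ‖y‖ := by
  have h1 : ‖∫ g in S, π g⁻¹ y ∂μ‖ ≤ ‖y‖ * (μ S).toReal :=
    norm_setIntegral_le hSfin (ae_of_all _ fun g => norm_pi_apply_le π hπ y g)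
  have h2 : (0:ℝ) ≤ (μ S).toReal⁻¹ := by positivity
  have h3 : (μ S).toReal⁻¹ * (μ S).toReal ≤ 1 := by
    rcases eq_or_ne ((μ S).toReal) 0 with h | h
    · simp [h]
    · rw [inv_mul_cancel₀ h]
  rw [norm_smul, Real.norm_of_nonneg h2]
  calc (μ S).toReal⁻¹ * ‖∫ g in S, π g⁻¹ y ∂μ‖ ≤ (μ S).toReal⁻¹ * (‖y‖ * (μ S).toReal) := by
        exact mul_le_mul_of_nonneg_left h1 h2
    _ = ‖y‖ * ((μ S).toReal⁻¹ * (μ S).toReal) := by ring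
    _ ≤ ‖y‖ * 1 := mul_le_mul_of_nonneg_left h3 (norm_nonneg _)
    _ = ‖y‖ := mul_one _

lemma avg_midpoint [MeasurableInv G] {μ : Measure G} {S : Set G} (hSfin : μ S ≠ ⊤)
    (π : G →* (B →L[ℝ] B)) (hπ : ∀ g : G, ‖π g‖ ≤ 1)
    (hmeas : ∀ x : B, StronglyMeasurable fun g => π g x) (a a' : B) :
    (μ S).toReal⁻¹ • ∫ g in S, π g⁻¹ ((1/2 : ℝ) • (a + a')) ∂μ
      = (1/2 : ℝ) • (((μ S).toReal⁻¹ • ∫ g in S, π g⁻¹ a ∂μ)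
          + (μ S).toReal⁻¹ • ∫ g in S, π g⁻¹ a' ∂μ) := by
  have h1 : (fun g : G => π g⁻¹ ((1/2:ℝ) • (a + a')))
      = fun g : G => (1/2:ℝ) • (π g⁻¹ a + π g⁻¹ a') := by
    funext g; rw [_root_.map_smul, map_add]
  rw [h1, integral_smul, integral_add (intOn π hπ hmeas a hSfin) (intOn π hπ hmeas a' hSfin),
    smul_comm, smul_add]

lemma key_est [MeasurableInv G] [MeasurableMul G] [MeasurableSMul G G]
    {μ : Measure G} [μ.IsMulLeftInvariant] [SMulInvariantMeasure G G μ]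
    (π : G →* (B →L[ℝ] B)) (hπ : ∀ g : G, ‖π g‖ ≤ 1)
    (hmeas : ∀ x : B, StronglyMeasurable fun g => π g x) (x : B)
    {S S' : Set G} (hSpos : 0 < μ S) (hSfin : μ S ≠ ⊤) (hS'fin : μ S' ≠ ⊤)
    (hS'nm : NullMeasurableSet S' μ)
    {η' : ℝ} (hη' : 0 ≤ η')
    {F' : Set G} (hF's : F' ⊆ S) (hF'm : MeasurableSet F')
    (hsmall : μ (S \ F') ≤ ENNReal.ofReal η' * μ S)
    (hinv : ∀ g ∈ F', μ (symmDiff S' (g • S')) ≤ ENNReal.ofReal η' * μ S') :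
    ‖((μ S').toReal⁻¹ • ∫ g in S', π g⁻¹ ((μ S).toReal⁻¹ • ∫ h in S, π h⁻¹ x ∂μ) ∂μ) -
      (μ S').toReal⁻¹ • ∫ g in S', π g⁻¹ x ∂μ‖ ≤ 3 * η' * ‖x‖ := by
  have hc' : (0:ℝ) ≤ (μ S').toReal⁻¹ := by positivity
  have hcS : (0:ℝ) ≤ (μ S).toReal⁻¹ := by positivity
  have hc'μ : (μ S').toReal⁻¹ * (μ S').toReal ≤ 1 := by
    rcases eq_or_ne ((μ S').toReal) 0 with h | h
    · simp [h]
    · rw [inv_mul_cancel₀ h]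
  have hSne : (μ S).toReal ≠ 0 := ENNReal.toReal_ne_zero.mpr ⟨hSpos.ne', hSfin⟩
  -- the averaging operator over S' as a continuous linear map
  let T : B →L[ℝ] B := LinearMap.mkContinuous
    { toFun := fun y => ∫ g in S', π g⁻¹ y ∂μ
      map_add' := fun y z => by
        rw [← integral_add (intOn π hπ hmeas y hS'fin) (intOn π hπ hmeas z hS'fin)]
        exact integral_congr_ae (ae_of_all _ fun g => map_add _ _ _)
      map_smul' := fun c y => by
        rw [← integral_smul]
        exact integral_congr_ae (ae_of_all _ fun g => map_smul _ _ _) }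
    ((μ S').toReal)
    (fun y => by
      simpa [mul_comm] using
        norm_setIntegral_le hS'fin (ae_of_all _ fun g => norm_pi_apply_le π hπ y g))
  have hT : ∀ y : B, T y = ∫ g in S', π g⁻¹ y ∂μ := fun y => rfl
  set AM : B → B := fun y => (μ S').toReal⁻¹ • T y with hAM
  have hAMeq : ∀ y : B, AM y = (μ S').toReal⁻¹ • ∫ g in S', π g⁻¹ y ∂μ := fun y => rfl
  have hcontr : ∀ y : B, ‖AM y‖ ≤ ‖y‖ := by
    intro y; rw [hAMeq]; exact contract hS'fin π hπ hmeas y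
  -- step 1 : pointwise estimate on F'
  have hstep1 : ∀ h ∈ F', ‖AM (π h⁻¹ x) - AM x‖ ≤ η' * ‖x‖ := by
    intro h hh
    have e0 : ∀ g : G, π g⁻¹ (π h⁻¹ x) = π (h * g)⁻¹ x := by
      intro g
      rw [mul_inv_rev, map_mul, ContinuousLinearMap.mul_apply]
    have e1 : (∫ g in S', π g⁻¹ (π h⁻¹ x) ∂μ) = ∫ g in h • S', π g⁻¹ x ∂μ := by
      rw [← translate (fun g : G => π g⁻¹ x) h S']
      exact integral_congr_ae (ae_of_all _ fun g => e0 g)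
    have hnm2 : NullMeasurableSet (h • S') μ := nm_smul hS'nm h
    have hfin2 : μ (h • S') ≠ ⊤ := by rw [measure_smul]; exact hS'fin
    have e2 : AM (π h⁻¹ x) - AM x
        = (μ S').toReal⁻¹ • ((∫ g in h • S', π g⁻¹ x ∂μ) - ∫ g in S', π g⁻¹ x ∂μ) := by
      rw [hAMeq, hAMeq, e1, smul_sub]
    have e3 := integral_diff_le (μ := μ) (sm_pi π hmeas x)
      (fun g => norm_pi_apply_le π hπ x g) hnm2 hS'nm hfin2 hS'fin
    have e4 : (μ (symmDiff (h • S') S')).toReal ≤ η' * (μ S').toReal := by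
      rw [symmDiff_comm]
      have h5 := hinv h hh
      have hne : ENNReal.ofReal η' * μ S' ≠ ⊤ :=
        ENNReal.mul_ne_top ENNReal.ofReal_ne_top hS'fin
      calc (μ (symmDiff S' (h • S'))).toReal ≤ (ENNReal.ofReal η' * μ S').toReal :=
            ENNReal.toReal_mono hne h5
        _ = η' * (μ S').toReal := by rw [ENNReal.toReal_mul, ENNReal.toReal_ofReal hη']
    rw [e2, norm_smul, Real.norm_of_nonneg hc']
    calc (μ S').toReal⁻¹ * ‖(∫ g in h • S', π g⁻¹ x ∂μ) - ∫ g in S', π g⁻¹ x ∂μ‖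
        ≤ (μ S').toReal⁻¹ * ((μ (symmDiff (h • S') S')).toReal * ‖x‖) :=
          mul_le_mul_of_nonneg_left e3 hc'
      _ ≤ (μ S').toReal⁻¹ * (η' * (μ S').toReal * ‖x‖) := by
          refine mul_le_mul_of_nonneg_left ?_ hc'
          exact mul_le_mul_of_nonneg_right e4 (norm_nonneg _)
      _ = (η' * ‖x‖) * ((μ S').toReal⁻¹ * (μ S').toReal) := by ring
      _ ≤ (η' * ‖x‖) * 1 := mul_le_mul_of_nonneg_left hc'μ (by positivity)
      _ = η' * ‖x‖ := mul_one _
  -- step 2 : express AM of the average over S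
  have hswap : AM ((μ S).toReal⁻¹ • ∫ h in S, π h⁻¹ x ∂μ)
      = (μ S).toReal⁻¹ • ∫ h in S, AM (π h⁻¹ x) ∂μ := by
    show (μ S').toReal⁻¹ • T ((μ S).toReal⁻¹ • ∫ h in S, π h⁻¹ x ∂μ)
        = (μ S).toReal⁻¹ • ∫ h in S, (μ S').toReal⁻¹ • T (π h⁻¹ x) ∂μ
    rw [T.map_smul, ← T.integral_comp_comm (intOn π hπ hmeas x hSfin), integral_smul]
    exact smul_comm _ _ _
  have hconst : AM x = (μ S).toReal⁻¹ • ∫ _ in S, AM x ∂μ := by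
    rw [setIntegral_const, smul_smul, Measure.real, inv_mul_cancel₀ hSne]
    exact (one_smul ℝ (AM x)).symm
  have hsmAM : StronglyMeasurable fun h : G => AM (π h⁻¹ x) := by
    have : (fun h : G => AM (π h⁻¹ x)) = fun h : G => (μ S').toReal⁻¹ • T (π h⁻¹ x) := rfl
    rw [this]
    exact (T.continuous.comp_stronglyMeasurable (sm_pi π hmeas x)).const_smul _
  have hintAM : IntegrableOn (fun h : G => AM (π h⁻¹ x)) S μ :=
    Measure.integrableOn_of_bounded hSfin hsmAM.aestronglyMeasurable
      (ae_of_all _ fun h => le_trans (hcontr _) (norm_pi_apply_le π hπ x h))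
  have hintC : IntegrableOn (fun _ : G => AM x) S μ :=
    integrableOn_const hSfin
  have hdiff : AM ((μ S).toReal⁻¹ • ∫ h in S, π h⁻¹ x ∂μ) - AM x
      = (μ S).toReal⁻¹ • ∫ h in S, (AM (π h⁻¹ x) - AM x) ∂μ := by
    rw [hswap, integral_sub hintAM hintC, smul_sub, ← hconst]
  have hunion : (S \ F') ∪ F' = S := Set.diff_union_of_subset hF's
  have hw : IntegrableOn (fun h : G => AM (π h⁻¹ x) - AM x) S μ := hintAM.sub hintC
  have hsplit : ∫ h in S, (AM (π h⁻¹ x) - AM x) ∂μ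
      = (∫ h in S \ F', (AM (π h⁻¹ x) - AM x) ∂μ)
        + ∫ h in F', (AM (π h⁻¹ x) - AM x) ∂μ := by
    rw [← integral_union_ae (Disjoint.aedisjoint (Set.disjoint_sdiff_left : Disjoint (S \ F') F')) hF'm.nullMeasurableSet
      (hw.mono_set Set.diff_subset) (hw.mono_set hF's), hunion]
  have hb1 : ‖∫ h in S \ F', (AM (π h⁻¹ x) - AM x) ∂μ‖ ≤ (2 * ‖x‖) * (μ (S \ F')).toReal := by
    refine norm_setIntegral_le (ne_top_of_le_ne_top hSfin (measure_mono Set.diff_subset))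
      (ae_of_all _ fun h => ?_)
    calc ‖AM (π h⁻¹ x) - AM x‖ ≤ ‖AM (π h⁻¹ x)‖ + ‖AM x‖ := norm_sub_le _ _
      _ ≤ ‖x‖ + ‖x‖ := add_le_add (le_trans (hcontr _) (norm_pi_apply_le π hπ x h)) (hcontr x)
      _ = 2 * ‖x‖ := by ring
  have hb2 : ‖∫ h in F', (AM (π h⁻¹ x) - AM x) ∂μ‖ ≤ (η' * ‖x‖) * (μ F').toReal := by
    refine norm_setIntegral_le (ne_top_of_le_ne_top hSfin (measure_mono hF's)) ?_
    exact (ae_restrict_iff' hF'm).mpr (ae_of_all _ hstep1)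
  have hm1 : (μ (S \ F')).toReal ≤ η' * (μ S).toReal := by
    have hne : ENNReal.ofReal η' * μ S ≠ ⊤ := ENNReal.mul_ne_top ENNReal.ofReal_ne_top hSfin
    calc (μ (S \ F')).toReal ≤ (ENNReal.ofReal η' * μ S).toReal := ENNReal.toReal_mono hne hsmall
      _ = η' * (μ S).toReal := by rw [ENNReal.toReal_mul, ENNReal.toReal_ofReal hη']
  have hm2 : (μ F').toReal ≤ (μ S).toReal := ENNReal.toReal_mono hSfin (measure_mono hF's)
  have hmain : ‖AM ((μ S).toReal⁻¹ • ∫ h in S, π h⁻¹ x ∂μ) - AM x‖ ≤ 3 * η' * ‖x‖ := by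
    rw [hdiff, norm_smul, Real.norm_of_nonneg hcS, hsplit]
    have hnn : (0:ℝ) ≤ ‖x‖ := norm_nonneg x
    have hμnn : (0:ℝ) ≤ (μ S).toReal := ENNReal.toReal_nonneg
    have hμ'nn : (0:ℝ) ≤ (μ (S \ F')).toReal := ENNReal.toReal_nonneg
    have hμ''nn : (0:ℝ) ≤ (μ F').toReal := ENNReal.toReal_nonneg
    have hSinv : (μ S).toReal⁻¹ * (μ S).toReal = 1 := inv_mul_cancel₀ hSne
    calc (μ S).toReal⁻¹ * ‖(∫ h in S \ F', (AM (π h⁻¹ x) - AM x) ∂μ)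
          + ∫ h in F', (AM (π h⁻¹ x) - AM x) ∂μ‖
        ≤ (μ S).toReal⁻¹ * ((2 * ‖x‖) * (μ (S \ F')).toReal + (η' * ‖x‖) * (μ F').toReal) := by
          refine mul_le_mul_of_nonneg_left (le_trans (norm_add_le _ _) (add_le_add hb1 hb2)) hcS
      _ ≤ (μ S).toReal⁻¹ * ((2 * ‖x‖) * (η' * (μ S).toReal) + (η' * ‖x‖) * (μ S).toReal) := by
          refine mul_le_mul_of_nonneg_left (add_le_add ?_ ?_) hcS
          · exact mul_le_mul_of_nonneg_left hm1 (by positivity)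
          · exact mul_le_mul_of_nonneg_left hm2 (by positivity)
      _ = (3 * η' * ‖x‖) * ((μ S).toReal⁻¹ * (μ S).toReal) := by ring
      _ = 3 * η' * ‖x‖ := by rw [hSinv, mul_one]
  calc ‖((μ S').toReal⁻¹ • ∫ g in S', π g⁻¹ ((μ S).toReal⁻¹ • ∫ h in S, π h⁻¹ x ∂μ) ∂μ) -
      (μ S').toReal⁻¹ • ∫ g in S', π g⁻¹ x ∂μ‖
      = ‖AM ((μ S).toReal⁻¹ • ∫ h in S, π h⁻¹ x ∂μ) - AM x‖ := by rw [hAMeq, hAMeq]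
    _ ≤ 3 * η' * ‖x‖ := hmain

end Stmt17Aux

/-- Main fluctuation bound: with a nondecreasing Følner convergence modulus `β`, a modulus
of uniform convexity `u`, and `0 < η < u(ε)/2`, any chain of `k` many `ε`-fluctuations of
the ergodic averages at distance `β(·, η/(3‖x‖))` satisfies
`k ≤ ⌊2‖x‖/(u(ε) − 2η)⌋`; with a lower bound `L` on the norms of the averages,
`k ≤ ⌊2(‖x‖ − L)/(u(ε) − 2η)⌋`. -/
theorem stmt_17 {G : Type*} [Group G] [TopologicalSpace G] [IsTopologicalGroup G]
    [LocallyCompactSpace G] [SecondCountableTopology G]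
    [MeasurableSpace G] [BorelSpace G]
    (μ : Measure G) [μ.IsHaarMeasure]
    (F : ℕ → Set G) (hFcpt : ∀ n, IsCompact (F n))
    (hFpos : ∀ n, 0 < μ (F n)) (hFfin : ∀ n, μ (F n) < ⊤)
    (hFolner : ∀ K : Set G, IsCompact K → 0 < μ K → ∀ ε : ℝ, 0 < ε → ∃ N : ℕ, ∀ n ≥ N,
      ∃ K' ⊆ K, MeasurableSet K' ∧ μ (K \ K') < ENNReal.ofReal ε * μ K ∧
        ∀ k ∈ K', μ (symmDiff (F n) (k • F n)) < ENNReal.ofReal ε * μ (F n))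
    (β : ℕ → ℝ → ℕ) (hβmono : ∀ ε : ℝ, Monotone fun n => β n ε)
    (hβ : ∀ (n : ℕ) (ε : ℝ), 0 < ε → ∀ m : ℕ, β n ε ≤ m →
      ∃ F' ⊆ F n, MeasurableSet F' ∧ μ (F n \ F') < ENNReal.ofReal ε * μ (F n) ∧
        ∀ g ∈ F', μ (symmDiff (F m) (g • F m)) < ENNReal.ofReal ε * μ (F m))
    {B : Type*} [NormedAddCommGroup B] [NormedSpace ℝ B] [CompleteSpace B]
    (u : ℝ → ℝ) (hupos : ∀ ε : ℝ, 0 < ε → 0 < u ε)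
    (humono : ∀ a b : ℝ, 0 < a → a ≤ b → u a ≤ u b)
    (huconv : ∀ ε : ℝ, 0 < ε → ∀ x y : B, ‖x‖ ≤ ‖y‖ → ‖y‖ ≤ 1 → ε ≤ ‖x - y‖ →
      ‖(1 / 2 : ℝ) • (x + y)‖ < ‖y‖ - u ε)
    (π : G →* (B →L[ℝ] B)) (hπ : ∀ g : G, ‖π g‖ ≤ 1)
    (hmeas : ∀ x : B, StronglyMeasurable fun g => π g x)
    (ε : ℝ) (hε : 0 < ε) (x : B) (hx0 : 0 < ‖x‖) (hx1 : ‖x‖ ≤ 1)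
    (η : ℝ) (hη0 : 0 < η) (hη : η < u ε / 2) :
    ∀ (k : ℕ) (idx : ℕ → ℕ),
      (∀ i < k, idx i < idx (i + 1) ∧ β (idx i) (η / (3 * ‖x‖)) ≤ idx (i + 1) ∧
        ε ≤ ‖((μ (F (idx i))).toReal⁻¹ • ∫ g in F (idx i), π g⁻¹ x ∂μ) -
            ((μ (F (idx (i + 1)))).toReal⁻¹ • ∫ g in F (idx (i + 1)), π g⁻¹ x ∂μ)‖) →
      k ≤ ⌊2 * ‖x‖ / (u ε - 2 * η)⌋₊ ∧
      (∀ L : ℝ, 0 ≤ L →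
        (∀ n : ℕ, L ≤ ‖(μ (F n)).toReal⁻¹ • ∫ g in F n, π g⁻¹ x ∂μ‖) →
        k ≤ ⌊2 * (‖x‖ - L) / (u ε - 2 * η)⌋₊) := by
  intro k idx hchain
  have hxne : ‖x‖ ≠ 0 := ne_of_gt hx0
  set η' : ℝ := η / (3 * ‖x‖) with hη'def
  have hη'pos : 0 < η' := div_pos hη0 (by positivity)
  have hu : 0 < u ε := hupos ε hε
  have hD : 0 < u ε - 2 * η := by linarith
  have hΔ : 0 < u ε - η := by linarith
  -- null measurability of the Følner sets
  have hNM : ∀ n : ℕ, NullMeasurableSet (F n) μ := by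
    intro n
    have hch : ∀ j : ℕ, ∃ E : Set G, E ⊆ F n ∧ MeasurableSet E ∧
        μ (F n \ E) < ENNReal.ofReal (((j : ℝ) + 1)⁻¹) * μ (F n) := by
      intro j
      obtain ⟨E, h1, h2, h3, _⟩ := hβ n (((j:ℝ)+1)⁻¹) (by positivity) _ le_rfl
      exact ⟨E, h1, h2, h3⟩
    choose E hsub hm hsm using hch
    refine ((MeasurableSet.iUnion hm).nullMeasurableSet).congr ?_
    rw [MeasureTheory.ae_eq_set]
    constructor
    · rw [Set.diff_eq_empty.mpr (Set.iUnion_subset hsub)]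
      exact measure_empty
    · by_contra hne
      have hfin2 : μ (F n \ ⋃ j, E j) ≠ ⊤ :=
        ne_top_of_le_ne_top (hFfin n).ne (measure_mono Set.diff_subset)
      have hct : 0 < (μ (F n \ ⋃ j, E j)).toReal := ENNReal.toReal_pos hne hfin2
      obtain ⟨j, hj⟩ := exists_nat_gt ((μ (F n)).toReal / (μ (F n \ ⋃ j, E j)).toReal)
      have hle : μ (F n \ ⋃ i, E i) ≤ ENNReal.ofReal (((j:ℝ)+1)⁻¹) * μ (F n) :=
        le_of_lt (lt_of_le_of_lt
          (measure_mono (Set.diff_subset_diff_right (Set.subset_iUnion E j))) (hsm j))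
      have hRne : ENNReal.ofReal (((j:ℝ)+1)⁻¹) * μ (F n) ≠ ⊤ :=
        ENNReal.mul_ne_top ENNReal.ofReal_ne_top (hFfin n).ne
      have hle' : (μ (F n \ ⋃ i, E i)).toReal ≤ ((j:ℝ)+1)⁻¹ * (μ (F n)).toReal := by
        calc (μ (F n \ ⋃ i, E i)).toReal
            ≤ (ENNReal.ofReal (((j:ℝ)+1)⁻¹) * μ (F n)).toReal := ENNReal.toReal_mono hRne hle
          _ = ((j:ℝ)+1)⁻¹ * (μ (F n)).toReal := by
              rw [ENNReal.toReal_mul, ENNReal.toReal_ofReal (by positivity)]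
      rw [div_lt_iff₀ hct] at hj
      rw [inv_mul_eq_div, le_div_iff₀ (by positivity : (0:ℝ) < (j:ℝ)+1)] at hle'
      nlinarith [hct]
  -- abbreviation for the averages
  set Av : ℕ → B → B := fun n y => (μ (F n)).toReal⁻¹ • ∫ g in F n, π g⁻¹ y ∂μ with hAv
  have hcontr : ∀ (n : ℕ) (y : B), ‖Av n y‖ ≤ ‖y‖ := fun n y =>
    Stmt17Aux.contract (hFfin n).ne π hπ hmeas y
  have hfl : ∀ i, i < k → ε ≤ ‖Av (idx i) x - Av (idx (i+1)) x‖ := fun i hi =>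
    (hchain i hi).2.2
  have hkey : ∀ n M : ℕ, β n η' ≤ M → ‖Av M (Av n x) - Av M x‖ ≤ η := by
    intro n M hM
    obtain ⟨F', h1, h2, h3, h4⟩ := hβ n η' hη'pos M hM
    have hest := Stmt17Aux.key_est π hπ hmeas x (hFpos n) (hFfin n).ne (hFfin M).ne (hNM M)
      hη'pos.le h1 h2 h3.le (fun g hg => (h4 g hg).le)
    have h3η : 3 * η' * ‖x‖ = η := by
      rw [hη'def]; field_simp
    show ‖((μ (F M)).toReal⁻¹ •
        ∫ g in F M, π g⁻¹ ((μ (F n)).toReal⁻¹ • ∫ h in F n, π h⁻¹ x ∂μ) ∂μ) -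
        (μ (F M)).toReal⁻¹ • ∫ g in F M, π g⁻¹ x ∂μ‖ ≤ η
    exact le_of_le_of_eq hest h3η
  have hmid : ∀ (M : ℕ) (a a' : B),
      Av M ((1/2 : ℝ) • (a + a')) = (1/2 : ℝ) • (Av M a + Av M a') := fun M a a' =>
    Stmt17Aux.avg_midpoint (hFfin M).ne π hπ hmeas a a'
  -- the drop lemma
  have hdrop : ∀ n n' M : ℕ, β n η' ≤ M → β n' η' ≤ M → ε ≤ ‖Av n x - Av n' x‖ →
      ‖Av M x‖ < max ‖Av n x‖ ‖Av n' x‖ - (u ε - η) := by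
    intro n n' M h1 h2 hflux
    have hmb : ‖Av M x - Av M ((1/2:ℝ) • (Av n x + Av n' x))‖ ≤ η := by
      rw [hmid]
      have e1 := hkey n M h1
      have e2 := hkey n' M h2
      have eid : Av M x - (1/2:ℝ) • (Av M (Av n x) + Av M (Av n' x))
          = (1/2:ℝ) • ((Av M x - Av M (Av n x)) + (Av M x - Av M (Av n' x))) := by
        module
      rw [eid, norm_smul, Real.norm_of_nonneg (by norm_num : (0:ℝ) ≤ 1/2)]
      have h5 : ‖(Av M x - Av M (Av n x)) + (Av M x - Av M (Av n' x))‖ ≤ η + η := by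
        refine le_trans (norm_add_le _ _) (add_le_add ?_ ?_)
        · rw [norm_sub_rev]; exact e1
        · rw [norm_sub_rev]; exact e2
      linarith
    have hconv : ‖(1/2:ℝ) • (Av n x + Av n' x)‖ < max ‖Av n x‖ ‖Av n' x‖ - u ε := by
      rcases le_total ‖Av n x‖ ‖Av n' x‖ with hle | hle
      · have h6 := huconv ε hε (Av n x) (Av n' x) hle (le_trans (hcontr n' x) hx1) hflux
        calc ‖(1/2:ℝ) • (Av n x + Av n' x)‖ < ‖Av n' x‖ - u ε := h6
          _ ≤ max ‖Av n x‖ ‖Av n' x‖ - u ε := sub_le_sub_right (le_max_right _ _) _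
      · have h6 := huconv ε hε (Av n' x) (Av n x) hle (le_trans (hcontr n x) hx1)
          (by rw [norm_sub_rev]; exact hflux)
        calc ‖(1/2:ℝ) • (Av n x + Av n' x)‖ = ‖(1/2:ℝ) • (Av n' x + Av n x)‖ := by
              rw [add_comm]
          _ < ‖Av n x‖ - u ε := h6
          _ ≤ max ‖Av n x‖ ‖Av n' x‖ - u ε := sub_le_sub_right (le_max_left _ _) _
    have h7 := norm_sub_norm_le (Av M x) (Av M ((1/2:ℝ) • (Av n x + Av n' x)))
    have h8 := hcontr M ((1/2:ℝ) • (Av n x + Av n' x))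
    linarith
  -- the main numeric bound
  have main : ∀ L : ℝ, (∀ n : ℕ, L ≤ ‖Av n x‖) → (k:ℝ) * (u ε - 2*η) ≤ 2 * (‖x‖ - L) := by
    intro L hLle
    cases k with
    | zero =>
      push_cast
      nlinarith [hLle 0, hcontr 0 x]
    | succ k' =>
      set t : ℕ → ℝ := fun i => ‖Av (idx i) x‖ with htdef
      have ht1 : ∀ i, t i ≤ ‖x‖ := fun i => hcontr _ x
      have hd2 : ∀ i, i + 2 ≤ k' + 1 → t (i+2) < max (t i) (t (i+1)) - (u ε - η) := by
        intro i hi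
        refine hdrop (idx i) (idx (i+1)) (idx (i+2)) ?_ ?_ (hfl i (by omega))
        · exact le_trans (hβmono η' (le_of_lt ((hchain i (by omega)).1)))
            ((hchain (i+1) (by omega)).2.1)
        · exact (hchain (i+1) (by omega)).2.1
      have hMx : ∀ i, i + 1 ≤ k' + 1 → max (t i) (t (i+1)) ≤ ‖x‖ - (↑(i/2) : ℝ) * (u ε - η) := by
        intro i
        induction i using Nat.strong_induction_on with
        | _ i IH =>
          match i, IH with
          | 0, _ => intro _; simpa using max_le (ht1 0) (ht1 1)
          | 1, _ => intro _; simpa using max_le (ht1 1) (ht1 2)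
          | (j+2), IH =>
            intro hle
            have h1 := IH j (by omega) (by omega)
            have h2 := IH (j+1) (by omega) (by omega)
            have d1 := hd2 j (by omega)
            have d2 := hd2 (j+1) (by omega)
            have hcast1 : ((j+2)/2 : ℕ) = (j/2 : ℕ) + 1 := by omega
            have hcast2 : ((j+2)/2 : ℕ) ≤ ((j+1)/2 : ℕ) + 1 := by omega
            have hcast2R : ((((j+2)/2 : ℕ)) : ℝ) ≤ (((j+1)/2 : ℕ) : ℝ) + 1 := by
              exact_mod_cast hcast2
            refine max_le ?_ ?_
            · have h9 : t (j+2) < ‖x‖ - (↑(j/2):ℝ) * (u ε - η) - (u ε - η) := by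
                linarith [d1, h1]
              rw [hcast1]; push_cast; linarith
            · have h9 : t (j+3) < ‖x‖ - (↑((j+1)/2):ℝ) * (u ε - η) - (u ε - η) := by
                linarith [d2, h2]
              nlinarith [hΔ, h9, hcast2R]
      have hlast : L < max (t k') (t (k'+1)) - (u ε - η) := by
        have hb1 : β (idx k') η' ≤ β (idx (k'+1)) η' :=
          hβmono η' (le_of_lt ((hchain k' (by omega)).1))
        have h10 := hdrop (idx k') (idx (k'+1)) (β (idx (k'+1)) η') hb1 le_rfl
          (hfl k' (by omega))
        exact lt_of_le_of_lt (hLle _) h10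
      have hk2 := hMx k' le_rfl
      have hkk : (k' + 1 : ℕ) ≤ 2 * (k'/2 : ℕ) + 2 := by omega
      have hkkR : ((k':ℝ) + 1) ≤ 2 * ((k'/2 : ℕ) : ℝ) + 2 := by exact_mod_cast hkk
      have hcnn : (0:ℝ) ≤ ((k'/2 : ℕ) : ℝ) := Nat.cast_nonneg _
      push_cast
      nlinarith [hlast, hk2, hkkR, hΔ, hD, hcnn]
  constructor
  · have h0 := main 0 (fun n => norm_nonneg _)
    apply Nat.le_floor
    rw [le_div_iff₀ hD]
    linarith
  · intro L hL0 hLn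
    apply Nat.le_floor
    rw [le_div_iff₀ hD]
    exact main L (fun n => hLn n)
end
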